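/- arXiv:2601.12574 — 7 statements merged into one kernel-verified Lean document; each statement's English description precedes it below -/
import Mathlib

section
/- Let n be a natural number with n ≥ 7, and let G be the circulant graph C_n({1, 3, n−3, n−1}). Then λ_{(3,2,1)}(G) ≥ 11. -/
/-- The circulant graph `C_n(S)`: vertices `u_1, …, u_n` (modelled as `Fin n`),
with `u_i` adjacent to `u_j` iff `|i - j| ∈ S`. -/
def circulant (n : ℕ) (S : Finset ℕ) : SimpleGraph (Fin n) where
  Adj i j := i ≠ j ∧ ((i : ℤ) - (j : ℤ)).natAbs ∈ S
  symm := by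
    constructor
    intro i j h
    refine ⟨h.1.symm, ?_⟩
    have h2 := h.2
    rwa [← Int.natAbs_neg, neg_sub]
  loopless := by
    constructor
    intro i h
    exact h.1 rfl

/-- An `L(3,2,1)`-labeling of `G`: an assignment of nonnegative integers to the
vertices such that `|f x - f y| > 3 - dist_G(x, y)` for every pair of distinct
vertices `x, y`. -/
def IsL321Labeling {V : Type*} (G : SimpleGraph V) (f : V → ℕ) : Prop :=
  ∀ x y : V, x ≠ y → (3 : ℤ) - G.dist x y < |(f x : ℤ) - (f y : ℤ)|

/-- The span of a labeling `f`: the difference between the largest and the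
smallest used value. -/
noncomputable def labelingSpan {V : Type*} [Fintype V] (f : V → ℕ) : ℕ :=
  Finset.univ.sup f - sInf (Set.range f)

/-- `λ_{(3,2,1)}(G)`: the minimum span among all `L(3,2,1)`-labelings of `G`. -/
noncomputable def lambda321 {V : Type*} [Fintype V] (G : SimpleGraph V) : ℕ :=
  sInf {s : ℕ | ∃ f : V → ℕ, IsL321Labeling G f ∧ s = labelingSpan f}


def okAux (v : ℕ) : List ℕ → List ℕ → Bool
  | r :: rs, w :: ws => decide (r ≤ (v - w) + (w - v)) && okAux v rs ws
  | _, _ => true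

def reqs : List ℕ := [3,2,3,2,1,2]

def search : ℕ → List ℕ → Bool
  | 0, _ => true
  | k+1, pre => (List.range 11).any fun v => okAux v reqs pre && search k (v :: pre)

def fits : List ℕ → List ℕ → Bool
  | _, [] => true
  | pre, v :: t => okAux v reqs pre && fits (v :: pre) t

lemma search12 : search 12 [] = false := by decide

lemma fits_nil (pre : List ℕ) : fits pre [] = true := rfl

lemma fits_cons {v : ℕ} {pre t : List ℕ} (h1 : okAux v reqs pre = true)
    (h2 : fits (v :: pre) t = true) : fits pre (v :: t) = true := by
  simp [fits, h1, h2]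

lemma fits_search (l : List ℕ) : ∀ pre, (∀ v ∈ l, v < 11) → fits pre l = true →
    search l.length pre = true := by
  induction l with
  | nil => intro pre _ _; rfl
  | cons v t ih =>
    intro pre hb hf
    simp only [fits, Bool.and_eq_true] at hf
    simp only [List.length_cons, search, List.any_eq_true]
    refine ⟨v, List.mem_range.mpr (hb v (by simp)), ?_⟩
    simp only [Bool.and_eq_true]
    exact ⟨hf.1, ih (v :: pre) (fun w hw => hb w (by simp [hw])) hf.2⟩

lemma abstract (a : ℕ → ℕ) (m : ℕ)
    (hb : ∀ k, k < 12 → m ≤ a k ∧ a k ≤ m + 10)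
    (hgap : ∀ i j c, j < 12 → ((j = i + 1 ∧ c = 3) ∨ (j = i + 2 ∧ c = 2) ∨ (j = i + 3 ∧ c = 3) ∨ (j = i + 4 ∧ c = 2) ∨ (j = i + 5 ∧ c = 1) ∨ (j = i + 6 ∧ c = 2)) → c ≤ (a j - a i) + (a i - a j)) : False := by
  have c0 : okAux (a 0 - m) reqs [] = true := rfl
  have c1 : okAux (a 1 - m) reqs [a 0 - m] = true := by
    simp only [okAux, reqs, Bool.and_eq_true, Bool.and_true, decide_eq_true_eq, and_true]
    exact (by have h := hgap 0 1 3 (by norm_num) (by norm_num); have b1 := hb 0 (by norm_num); have b2 := hb 1 (by norm_num); omega)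
  have c2 : okAux (a 2 - m) reqs [a 1 - m, a 0 - m] = true := by
    simp only [okAux, reqs, Bool.and_eq_true, Bool.and_true, decide_eq_true_eq, and_true]
    exact ⟨(by have h := hgap 1 2 3 (by norm_num) (by norm_num); have b1 := hb 1 (by norm_num); have b2 := hb 2 (by norm_num); omega), (by have h := hgap 0 2 2 (by norm_num) (by norm_num); have b1 := hb 0 (by norm_num); have b2 := hb 2 (by norm_num); omega)⟩
  have c3 : okAux (a 3 - m) reqs [a 2 - m, a 1 - m, a 0 - m] = true := by
    simp only [okAux, reqs, Bool.and_eq_true, Bool.and_true, decide_eq_true_eq, and_true]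
    exact ⟨(by have h := hgap 2 3 3 (by norm_num) (by norm_num); have b1 := hb 2 (by norm_num); have b2 := hb 3 (by norm_num); omega), (by have h := hgap 1 3 2 (by norm_num) (by norm_num); have b1 := hb 1 (by norm_num); have b2 := hb 3 (by norm_num); omega), (by have h := hgap 0 3 3 (by norm_num) (by norm_num); have b1 := hb 0 (by norm_num); have b2 := hb 3 (by norm_num); omega)⟩
  have c4 : okAux (a 4 - m) reqs [a 3 - m, a 2 - m, a 1 - m, a 0 - m] = true := by
    simp only [okAux, reqs, Bool.and_eq_true, Bool.and_true, decide_eq_true_eq, and_true]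
    exact ⟨(by have h := hgap 3 4 3 (by norm_num) (by norm_num); have b1 := hb 3 (by norm_num); have b2 := hb 4 (by norm_num); omega), (by have h := hgap 2 4 2 (by norm_num) (by norm_num); have b1 := hb 2 (by norm_num); have b2 := hb 4 (by norm_num); omega), (by have h := hgap 1 4 3 (by norm_num) (by norm_num); have b1 := hb 1 (by norm_num); have b2 := hb 4 (by norm_num); omega), (by have h := hgap 0 4 2 (by norm_num) (by norm_num); have b1 := hb 0 (by norm_num); have b2 := hb 4 (by norm_num); omega)⟩
  have c5 : okAux (a 5 - m) reqs [a 4 - m, a 3 - m, a 2 - m, a 1 - m, a 0 - m] = true := by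
    simp only [okAux, reqs, Bool.and_eq_true, Bool.and_true, decide_eq_true_eq, and_true]
    exact ⟨(by have h := hgap 4 5 3 (by norm_num) (by norm_num); have b1 := hb 4 (by norm_num); have b2 := hb 5 (by norm_num); omega), (by have h := hgap 3 5 2 (by norm_num) (by norm_num); have b1 := hb 3 (by norm_num); have b2 := hb 5 (by norm_num); omega), (by have h := hgap 2 5 3 (by norm_num) (by norm_num); have b1 := hb 2 (by norm_num); have b2 := hb 5 (by norm_num); omega), (by have h := hgap 1 5 2 (by norm_num) (by norm_num); have b1 := hb 1 (by norm_num); have b2 := hb 5 (by norm_num); omega), (by have h := hgap 0 5 1 (by norm_num) (by norm_num); have b1 := hb 0 (by norm_num); have b2 := hb 5 (by norm_num); omega)⟩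
  have c6 : okAux (a 6 - m) reqs [a 5 - m, a 4 - m, a 3 - m, a 2 - m, a 1 - m, a 0 - m] = true := by
    simp only [okAux, reqs, Bool.and_eq_true, Bool.and_true, decide_eq_true_eq, and_true]
    exact ⟨(by have h := hgap 5 6 3 (by norm_num) (by norm_num); have b1 := hb 5 (by norm_num); have b2 := hb 6 (by norm_num); omega), (by have h := hgap 4 6 2 (by norm_num) (by norm_num); have b1 := hb 4 (by norm_num); have b2 := hb 6 (by norm_num); omega), (by have h := hgap 3 6 3 (by norm_num) (by norm_num); have b1 := hb 3 (by norm_num); have b2 := hb 6 (by norm_num); omega), (by have h := hgap 2 6 2 (by norm_num) (by norm_num); have b1 := hb 2 (by norm_num); have b2 := hb 6 (by norm_num); omega), (by have h := hgap 1 6 1 (by norm_num) (by norm_num); have b1 := hb 1 (by norm_num); have b2 := hb 6 (by norm_num); omega), (by have h := hgap 0 6 2 (by norm_num) (by norm_num); have b1 := hb 0 (by norm_num); have b2 := hb 6 (by norm_num); omega)⟩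
  have c7 : okAux (a 7 - m) reqs [a 6 - m, a 5 - m, a 4 - m, a 3 - m, a 2 - m, a 1 - m, a 0 - m] = true := by
    simp only [okAux, reqs, Bool.and_eq_true, Bool.and_true, decide_eq_true_eq, and_true]
    exact ⟨(by have h := hgap 6 7 3 (by norm_num) (by norm_num); have b1 := hb 6 (by norm_num); have b2 := hb 7 (by norm_num); omega), (by have h := hgap 5 7 2 (by norm_num) (by norm_num); have b1 := hb 5 (by norm_num); have b2 := hb 7 (by norm_num); omega), (by have h := hgap 4 7 3 (by norm_num) (by norm_num); have b1 := hb 4 (by norm_num); have b2 := hb 7 (by norm_num); omega), (by have h := hgap 3 7 2 (by norm_num) (by norm_num); have b1 := hb 3 (by norm_num); have b2 := hb 7 (by norm_num); omega), (by have h := hgap 2 7 1 (by norm_num) (by norm_num); have b1 := hb 2 (by norm_num); have b2 := hb 7 (by norm_num); omega), (by have h := hgap 1 7 2 (by norm_num) (by norm_num); have b1 := hb 1 (by norm_num); have b2 := hb 7 (by norm_num); omega)⟩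
  have c8 : okAux (a 8 - m) reqs [a 7 - m, a 6 - m, a 5 - m, a 4 - m, a 3 - m, a 2 - m, a 1 - m, a 0 - m] = true := by
    simp only [okAux, reqs, Bool.and_eq_true, Bool.and_true, decide_eq_true_eq, and_true]
    exact ⟨(by have h := hgap 7 8 3 (by norm_num) (by norm_num); have b1 := hb 7 (by norm_num); have b2 := hb 8 (by norm_num); omega), (by have h := hgap 6 8 2 (by norm_num) (by norm_num); have b1 := hb 6 (by norm_num); have b2 := hb 8 (by norm_num); omega), (by have h := hgap 5 8 3 (by norm_num) (by norm_num); have b1 := hb 5 (by norm_num); have b2 := hb 8 (by norm_num); omega), (by have h := hgap 4 8 2 (by norm_num) (by norm_num); have b1 := hb 4 (by norm_num); have b2 := hb 8 (by norm_num); omega), (by have h := hgap 3 8 1 (by norm_num) (by norm_num); have b1 := hb 3 (by norm_num); have b2 := hb 8 (by norm_num); omega), (by have h := hgap 2 8 2 (by norm_num) (by norm_num); have b1 := hb 2 (by norm_num); have b2 := hb 8 (by norm_num); omega)⟩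
  have c9 : okAux (a 9 - m) reqs [a 8 - m, a 7 - m, a 6 - m, a 5 - m, a 4 - m, a 3 - m, a 2 - m, a 1 - m, a 0 - m] = true := by
    simp only [okAux, reqs, Bool.and_eq_true, Bool.and_true, decide_eq_true_eq, and_true]
    exact ⟨(by have h := hgap 8 9 3 (by norm_num) (by norm_num); have b1 := hb 8 (by norm_num); have b2 := hb 9 (by norm_num); omega), (by have h := hgap 7 9 2 (by norm_num) (by norm_num); have b1 := hb 7 (by norm_num); have b2 := hb 9 (by norm_num); omega), (by have h := hgap 6 9 3 (by norm_num) (by norm_num); have b1 := hb 6 (by norm_num); have b2 := hb 9 (by norm_num); omega), (by have h := hgap 5 9 2 (by norm_num) (by norm_num); have b1 := hb 5 (by norm_num); have b2 := hb 9 (by norm_num); omega), (by have h := hgap 4 9 1 (by norm_num) (by norm_num); have b1 := hb 4 (by norm_num); have b2 := hb 9 (by norm_num); omega), (by have h := hgap 3 9 2 (by norm_num) (by norm_num); have b1 := hb 3 (by norm_num); have b2 := hb 9 (by norm_num); omega)⟩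
  have c10 : okAux (a 10 - m) reqs [a 9 - m, a 8 - m, a 7 - m, a 6 - m, a 5 - m, a 4 - m, a 3 - m, a 2 - m, a 1 - m, a 0 - m] = true := by
    simp only [okAux, reqs, Bool.and_eq_true, Bool.and_true, decide_eq_true_eq, and_true]
    exact ⟨(by have h := hgap 9 10 3 (by norm_num) (by norm_num); have b1 := hb 9 (by norm_num); have b2 := hb 10 (by norm_num); omega), (by have h := hgap 8 10 2 (by norm_num) (by norm_num); have b1 := hb 8 (by norm_num); have b2 := hb 10 (by norm_num); omega), (by have h := hgap 7 10 3 (by norm_num) (by norm_num); have b1 := hb 7 (by norm_num); have b2 := hb 10 (by norm_num); omega), (by have h := hgap 6 10 2 (by norm_num) (by norm_num); have b1 := hb 6 (by norm_num); have b2 := hb 10 (by norm_num); omega), (by have h := hgap 5 10 1 (by norm_num) (by norm_num); have b1 := hb 5 (by norm_num); have b2 := hb 10 (by norm_num); omega), (by have h := hgap 4 10 2 (by norm_num) (by norm_num); have b1 := hb 4 (by norm_num); have b2 := hb 10 (by norm_num); omega)⟩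
  have c11 : okAux (a 11 - m) reqs [a 10 - m, a 9 - m, a 8 - m, a 7 - m, a 6 - m, a 5 - m, a 4 - m, a 3 - m, a 2 - m, a 1 - m, a 0 - m] = true := by
    simp only [okAux, reqs, Bool.and_eq_true, Bool.and_true, decide_eq_true_eq, and_true]
    exact ⟨(by have h := hgap 10 11 3 (by norm_num) (by norm_num); have b1 := hb 10 (by norm_num); have b2 := hb 11 (by norm_num); omega), (by have h := hgap 9 11 2 (by norm_num) (by norm_num); have b1 := hb 9 (by norm_num); have b2 := hb 11 (by norm_num); omega), (by have h := hgap 8 11 3 (by norm_num) (by norm_num); have b1 := hb 8 (by norm_num); have b2 := hb 11 (by norm_num); omega), (by have h := hgap 7 11 2 (by norm_num) (by norm_num); have b1 := hb 7 (by norm_num); have b2 := hb 11 (by norm_num); omega), (by have h := hgap 6 11 1 (by norm_num) (by norm_num); have b1 := hb 6 (by norm_num); have b2 := hb 11 (by norm_num); omega), (by have h := hgap 5 11 2 (by norm_num) (by norm_num); have b1 := hb 5 (by norm_num); have b2 := hb 11 (by norm_num); omega)⟩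
  have hvb : ∀ v ∈ [a 0 - m, a 1 - m, a 2 - m, a 3 - m, a 4 - m, a 5 - m, a 6 - m, a 7 - m, a 8 - m, a 9 - m, a 10 - m, a 11 - m], v < 11 := by
    intro v hv
    simp only [List.mem_cons, List.not_mem_nil, or_false] at hv
    rcases hv with rfl|rfl|rfl|rfl|rfl|rfl|rfl|rfl|rfl|rfl|rfl|rfl
    · have := hb 0 (by norm_num); omega
    · have := hb 1 (by norm_num); omega
    · have := hb 2 (by norm_num); omega
    · have := hb 3 (by norm_num); omega
    · have := hb 4 (by norm_num); omega
    · have := hb 5 (by norm_num); omega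
    · have := hb 6 (by norm_num); omega
    · have := hb 7 (by norm_num); omega
    · have := hb 8 (by norm_num); omega
    · have := hb 9 (by norm_num); omega
    · have := hb 10 (by norm_num); omega
    · have := hb 11 (by norm_num); omega
  have F : fits [] [a 0 - m, a 1 - m, a 2 - m, a 3 - m, a 4 - m, a 5 - m, a 6 - m, a 7 - m, a 8 - m, a 9 - m, a 10 - m, a 11 - m] = true := fits_cons c0 (fits_cons c1 (fits_cons c2 (fits_cons c3 (fits_cons c4 (fits_cons c5 (fits_cons c6 (fits_cons c7 (fits_cons c8 (fits_cons c9 (fits_cons c10 (fits_cons c11 (fits_nil _))))))))))))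
  have S : search 12 [] = true := fits_search _ [] hvb F
  rw [search12] at S
  exact Bool.noConfusion S

lemma modid (k n : ℕ) (h7 : 7 ≤ n) (hk : k < 14) : k % n = k ∨ k % n + n = k := by
  rcases Nat.lt_or_ge k n with h | h
  · exact Or.inl (Nat.mod_eq_of_lt h)
  · right
    rw [Nat.mod_eq_sub_mod h, Nat.mod_eq_of_lt (by omega)]
    omega

lemma adj_gen (n : ℕ) (hn : 7 ≤ n) (a b : ℕ) (ha : a < n) (hb : b < n)
    (h : a + 1 = b ∨ b + 1 = a ∨ a + 3 = b ∨ b + 3 = a ∨ a + n = b + 1 ∨ b + n = a + 1 ∨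
      a + n = b + 3 ∨ b + n = a + 3) :
    (circulant n {1, 3, n - 3, n - 1}).Adj ⟨a, ha⟩ ⟨b, hb⟩ := by
  refine ⟨?_, ?_⟩
  · intro he
    have : a = b := congrArg Fin.val he
    omega
  · simp only [Finset.mem_insert, Finset.mem_singleton]
    have e1 : (((⟨a, ha⟩ : Fin n) : ℤ)) = (a : ℤ) := rfl
    have e2 : (((⟨b, hb⟩ : Fin n) : ℤ)) = (b : ℤ) := rfl
    rw [e1, e2]
    omega

theorem lambda321_circulant_1_3_lower_bound (n : ℕ) (hn : 7 ≤ n) :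
    11 ≤ lambda321 (circulant n {1, 3, n - 3, n - 1}) := by
  have hn0 : 0 < n := by omega
  refine le_csInf ⟨_, fun v => 12 * v.val, fun x y hxy => ?_, rfl⟩ ?_
  · have hv : x.val ≠ y.val := fun h => hxy (Fin.ext h)
    have habs : |(12 * (x.val:ℤ)) - 12 * (y.val:ℤ)| = ((12 * (x.val:ℤ)) - 12 * (y.val:ℤ)).natAbs :=
      Int.abs_eq_natAbs _
    push_cast
    rw [habs]
    omega
  rintro s ⟨f, hf, rfl⟩
  by_contra hcon
  push_neg at hcon
  rw [labelingSpan] at hcon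
  set M := Finset.univ.sup f with hM
  set m := sInf (Set.range f) with hm
  have hble : ∀ x : Fin n, m ≤ f x ∧ f x ≤ M := fun x =>
    ⟨Nat.sInf_le ⟨x, rfl⟩, Finset.le_sup (Finset.mem_univ x)⟩
  have hb : ∀ k, k < 12 → m ≤ f ⟨k % n, Nat.mod_lt k hn0⟩ ∧ f ⟨k % n, Nat.mod_lt k hn0⟩ ≤ m + 10 := by
    intro k hk
    have h1 := hble ⟨k % n, Nat.mod_lt k hn0⟩
    have h2 := hble ⟨0 % n, Nat.mod_lt 0 hn0⟩
    omega
  have hgap : ∀ i j c, j < 12 → ((j = i + 1 ∧ c = 3) ∨ (j = i + 2 ∧ c = 2) ∨ (j = i + 3 ∧ c = 3) ∨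
      (j = i + 4 ∧ c = 2) ∨ (j = i + 5 ∧ c = 1) ∨ (j = i + 6 ∧ c = 2)) →
      c ≤ (f ⟨j % n, Nat.mod_lt j hn0⟩ - f ⟨i % n, Nat.mod_lt i hn0⟩) +
        (f ⟨i % n, Nat.mod_lt i hn0⟩ - f ⟨j % n, Nat.mod_lt j hn0⟩) := by
    intro i j c hj hdc
    rcases hdc with ⟨rfl, rfl⟩ | ⟨rfl, rfl⟩ | ⟨rfl, rfl⟩ | ⟨rfl, rfl⟩ | ⟨rfl, rfl⟩ | ⟨rfl, rfl⟩
    · -- d = 1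
      have E0 := modid i n hn (by omega)
      have B0 : i % n < n := Nat.mod_lt _ hn0
      have E1 := modid (i + 1) n hn (by omega)
      have B1 : (i + 1) % n < n := Nat.mod_lt _ hn0
      rcases E0 with E0 | E0 <;> rcases E1 with E1 | E1
      all_goals
        have hdist : (circulant n {1, 3, n - 3, n - 1}).dist (⟨i % n, Nat.mod_lt i hn0⟩ : Fin n) (⟨(i + 1) % n, Nat.mod_lt (i + 1) hn0⟩ : Fin n) ≤ 1 := by
          refine le_trans (SimpleGraph.dist_le (SimpleGraph.Walk.cons (adj_gen n hn (i % n) ((i + 1) % n) (Nat.mod_lt i hn0) (Nat.mod_lt (i + 1) hn0) (by omega)) SimpleGraph.Walk.nil)) ?_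
          simp [SimpleGraph.Walk.length_cons, SimpleGraph.Walk.length_nil]
        have habs := hf (⟨i % n, Nat.mod_lt i hn0⟩ : Fin n) (⟨(i + 1) % n, Nat.mod_lt (i + 1) hn0⟩ : Fin n) (Fin.ne_of_val_ne (by show i % n ≠ (i + 1) % n; omega))
        rw [Int.abs_eq_natAbs] at habs
        omega
    · -- d = 2
      have E0 := modid i n hn (by omega)
      have B0 : i % n < n := Nat.mod_lt _ hn0
      have E1 := modid (i + 1) n hn (by omega)
      have B1 : (i + 1) % n < n := Nat.mod_lt _ hn0
      have E2 := modid (i + 2) n hn (by omega)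
      have B2 : (i + 2) % n < n := Nat.mod_lt _ hn0
      rcases E0 with E0 | E0 <;> rcases E1 with E1 | E1 <;> rcases E2 with E2 | E2
      all_goals
        have hdist : (circulant n {1, 3, n - 3, n - 1}).dist (⟨i % n, Nat.mod_lt i hn0⟩ : Fin n) (⟨(i + 2) % n, Nat.mod_lt (i + 2) hn0⟩ : Fin n) ≤ 2 := by
          refine le_trans (SimpleGraph.dist_le (SimpleGraph.Walk.cons (adj_gen n hn (i % n) ((i + 1) % n) (Nat.mod_lt i hn0) (Nat.mod_lt (i + 1) hn0) (by omega)) (SimpleGraph.Walk.cons (adj_gen n hn ((i + 1) % n) ((i + 2) % n) (Nat.mod_lt (i + 1) hn0) (Nat.mod_lt (i + 2) hn0) (by omega)) SimpleGraph.Walk.nil))) ?_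
          simp [SimpleGraph.Walk.length_cons, SimpleGraph.Walk.length_nil]
        have habs := hf (⟨i % n, Nat.mod_lt i hn0⟩ : Fin n) (⟨(i + 2) % n, Nat.mod_lt (i + 2) hn0⟩ : Fin n) (Fin.ne_of_val_ne (by show i % n ≠ (i + 2) % n; omega))
        rw [Int.abs_eq_natAbs] at habs
        omega
    · -- d = 3
      have E0 := modid i n hn (by omega)
      have B0 : i % n < n := Nat.mod_lt _ hn0
      have E3 := modid (i + 3) n hn (by omega)
      have B3 : (i + 3) % n < n := Nat.mod_lt _ hn0
      rcases E0 with E0 | E0 <;> rcases E3 with E3 | E3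
      all_goals
        have hdist : (circulant n {1, 3, n - 3, n - 1}).dist (⟨i % n, Nat.mod_lt i hn0⟩ : Fin n) (⟨(i + 3) % n, Nat.mod_lt (i + 3) hn0⟩ : Fin n) ≤ 1 := by
          refine le_trans (SimpleGraph.dist_le (SimpleGraph.Walk.cons (adj_gen n hn (i % n) ((i + 3) % n) (Nat.mod_lt i hn0) (Nat.mod_lt (i + 3) hn0) (by omega)) SimpleGraph.Walk.nil)) ?_
          simp [SimpleGraph.Walk.length_cons, SimpleGraph.Walk.length_nil]
        have habs := hf (⟨i % n, Nat.mod_lt i hn0⟩ : Fin n) (⟨(i + 3) % n, Nat.mod_lt (i + 3) hn0⟩ : Fin n) (Fin.ne_of_val_ne (by show i % n ≠ (i + 3) % n; omega))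
        rw [Int.abs_eq_natAbs] at habs
        omega
    · -- d = 4
      have E0 := modid i n hn (by omega)
      have B0 : i % n < n := Nat.mod_lt _ hn0
      have E1 := modid (i + 1) n hn (by omega)
      have B1 : (i + 1) % n < n := Nat.mod_lt _ hn0
      have E4 := modid (i + 4) n hn (by omega)
      have B4 : (i + 4) % n < n := Nat.mod_lt _ hn0
      rcases E0 with E0 | E0 <;> rcases E1 with E1 | E1 <;> rcases E4 with E4 | E4
      all_goals
        have hdist : (circulant n {1, 3, n - 3, n - 1}).dist (⟨i % n, Nat.mod_lt i hn0⟩ : Fin n) (⟨(i + 4) % n, Nat.mod_lt (i + 4) hn0⟩ : Fin n) ≤ 2 := by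
          refine le_trans (SimpleGraph.dist_le (SimpleGraph.Walk.cons (adj_gen n hn (i % n) ((i + 1) % n) (Nat.mod_lt i hn0) (Nat.mod_lt (i + 1) hn0) (by omega)) (SimpleGraph.Walk.cons (adj_gen n hn ((i + 1) % n) ((i + 4) % n) (Nat.mod_lt (i + 1) hn0) (Nat.mod_lt (i + 4) hn0) (by omega)) SimpleGraph.Walk.nil))) ?_
          simp [SimpleGraph.Walk.length_cons, SimpleGraph.Walk.length_nil]
        have habs := hf (⟨i % n, Nat.mod_lt i hn0⟩ : Fin n) (⟨(i + 4) % n, Nat.mod_lt (i + 4) hn0⟩ : Fin n) (Fin.ne_of_val_ne (by show i % n ≠ (i + 4) % n; omega))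
        rw [Int.abs_eq_natAbs] at habs
        omega
    · -- d = 5
      have E0 := modid i n hn (by omega)
      have B0 : i % n < n := Nat.mod_lt _ hn0
      have E3 := modid (i + 3) n hn (by omega)
      have B3 : (i + 3) % n < n := Nat.mod_lt _ hn0
      have E4 := modid (i + 4) n hn (by omega)
      have B4 : (i + 4) % n < n := Nat.mod_lt _ hn0
      have E5 := modid (i + 5) n hn (by omega)
      have B5 : (i + 5) % n < n := Nat.mod_lt _ hn0
      rcases E0 with E0 | E0 <;> rcases E3 with E3 | E3 <;> rcases E4 with E4 | E4 <;> rcases E5 with E5 | E5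
      all_goals
        have hdist : (circulant n {1, 3, n - 3, n - 1}).dist (⟨i % n, Nat.mod_lt i hn0⟩ : Fin n) (⟨(i + 5) % n, Nat.mod_lt (i + 5) hn0⟩ : Fin n) ≤ 3 := by
          refine le_trans (SimpleGraph.dist_le (SimpleGraph.Walk.cons (adj_gen n hn (i % n) ((i + 3) % n) (Nat.mod_lt i hn0) (Nat.mod_lt (i + 3) hn0) (by omega)) (SimpleGraph.Walk.cons (adj_gen n hn ((i + 3) % n) ((i + 4) % n) (Nat.mod_lt (i + 3) hn0) (Nat.mod_lt (i + 4) hn0) (by omega)) (SimpleGraph.Walk.cons (adj_gen n hn ((i + 4) % n) ((i + 5) % n) (Nat.mod_lt (i + 4) hn0) (Nat.mod_lt (i + 5) hn0) (by omega)) SimpleGraph.Walk.nil)))) ?_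
          simp [SimpleGraph.Walk.length_cons, SimpleGraph.Walk.length_nil]
        have habs := hf (⟨i % n, Nat.mod_lt i hn0⟩ : Fin n) (⟨(i + 5) % n, Nat.mod_lt (i + 5) hn0⟩ : Fin n) (Fin.ne_of_val_ne (by show i % n ≠ (i + 5) % n; omega))
        rw [Int.abs_eq_natAbs] at habs
        omega
    · -- d = 6
      have E0 := modid i n hn (by omega)
      have B0 : i % n < n := Nat.mod_lt _ hn0
      have E3 := modid (i + 3) n hn (by omega)
      have B3 : (i + 3) % n < n := Nat.mod_lt _ hn0
      have E6 := modid (i + 6) n hn (by omega)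
      have B6 : (i + 6) % n < n := Nat.mod_lt _ hn0
      rcases E0 with E0 | E0 <;> rcases E3 with E3 | E3 <;> rcases E6 with E6 | E6
      all_goals
        have hdist : (circulant n {1, 3, n - 3, n - 1}).dist (⟨i % n, Nat.mod_lt i hn0⟩ : Fin n) (⟨(i + 6) % n, Nat.mod_lt (i + 6) hn0⟩ : Fin n) ≤ 2 := by
          refine le_trans (SimpleGraph.dist_le (SimpleGraph.Walk.cons (adj_gen n hn (i % n) ((i + 3) % n) (Nat.mod_lt i hn0) (Nat.mod_lt (i + 3) hn0) (by omega)) (SimpleGraph.Walk.cons (adj_gen n hn ((i + 3) % n) ((i + 6) % n) (Nat.mod_lt (i + 3) hn0) (Nat.mod_lt (i + 6) hn0) (by omega)) SimpleGraph.Walk.nil))) ?_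
          simp [SimpleGraph.Walk.length_cons, SimpleGraph.Walk.length_nil]
        have habs := hf (⟨i % n, Nat.mod_lt i hn0⟩ : Fin n) (⟨(i + 6) % n, Nat.mod_lt (i + 6) hn0⟩ : Fin n) (Fin.ne_of_val_ne (by show i % n ≠ (i + 6) % n; omega))
        rw [Int.abs_eq_natAbs] at habs
        omega
  exact abstract (fun k => f ⟨k % n, Nat.mod_lt k hn0⟩) m hb hgap
end

section
/- Let k and n be positive natural numbers, and let G be the circulant graph C_n({1, 3, n−3, n−1}). If n = 10k or n = 14k, then λ_{(3,2,1)}(G) ≤ 13. -/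
/-- The finite check needed for the labeling `i ↦ 3 * (i % p) % 14`. -/
def patCheck (p : ℕ) : Prop := ∀ a b : Fin p, ∀ e : Fin 10,
  ((a : ℤ) - (b : ℤ) - (e : ℤ)) % (p : ℤ) = 0 →
  (((e : ℕ) = 1 ∨ (e : ℕ) = 3) →
    3 ≤ |((3 * (a : ℕ) % 14 : ℕ) : ℤ) - ((3 * (b : ℕ) % 14 : ℕ) : ℤ)|) ∧
  (((e : ℕ) = 2 ∨ (e : ℕ) = 4 ∨ (e : ℕ) = 6) →
    2 ≤ |((3 * (a : ℕ) % 14 : ℕ) : ℤ) - ((3 * (b : ℕ) % 14 : ℕ) : ℤ)|) ∧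
  ((e : ℕ) % 2 = 1 →
    1 ≤ |((3 * (a : ℕ) % 14 : ℕ) : ℤ) - ((3 * (b : ℕ) % 14 : ℕ) : ℤ)|)

lemma patCheck10 : patCheck 10 := by unfold patCheck; decide

lemma patCheck14 : patCheck 14 := by unfold patCheck; decide

lemma circ_adj_step {n : ℕ} (hn : 10 ≤ n) {x z : Fin n}
    (h : (circulant n {1, 3, n - 3, n - 1}).Adj x z) :
    ∃ e : ℤ, (e = 1 ∨ e = -1 ∨ e = 3 ∨ e = -3) ∧
      (n : ℤ) ∣ ((x : ℤ) - (z : ℤ) - e) := by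
  obtain ⟨-, h2⟩ := h
  simp only [Finset.mem_insert, Finset.mem_singleton] at h2
  rcases h2 with h | h | h | h <;>
    rcases Int.natAbs_eq ((x : ℤ) - (z : ℤ)) with he | he
  · exact ⟨1, Or.inl rfl, ⟨0, by omega⟩⟩
  · exact ⟨-1, Or.inr (Or.inl rfl), ⟨0, by omega⟩⟩
  · exact ⟨3, Or.inr (Or.inr (Or.inl rfl)), ⟨0, by omega⟩⟩
  · exact ⟨-3, Or.inr (Or.inr (Or.inr rfl)), ⟨0, by omega⟩⟩
  · exact ⟨-3, Or.inr (Or.inr (Or.inr rfl)), ⟨1, by omega⟩⟩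
  · exact ⟨3, Or.inr (Or.inr (Or.inl rfl)), ⟨-1, by omega⟩⟩
  · exact ⟨-1, Or.inr (Or.inl rfl), ⟨1, by omega⟩⟩
  · exact ⟨1, Or.inl rfl, ⟨-1, by omega⟩⟩

lemma circ_walk_sum {n : ℕ} (hn : 10 ≤ n) {x y : Fin n}
    (w : (circulant n {1, 3, n - 3, n - 1}).Walk x y) :
    ∃ s : ℤ, s.natAbs ≤ 3 * w.length ∧ s % 2 = (w.length : ℤ) % 2 ∧
      (n : ℤ) ∣ ((x : ℤ) - (y : ℤ) - s) := by
  induction w with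
  | nil => exact ⟨0, by simp, by simp, by simp⟩
  | @cons u v y h w ih =>
    obtain ⟨e, he, hd⟩ := circ_adj_step hn h
    obtain ⟨s, hs1, hs2, hsd⟩ := ih
    refine ⟨e + s, ?_, ?_, ?_⟩
    · simp only [SimpleGraph.Walk.length_cons]
      omega
    · simp only [SimpleGraph.Walk.length_cons]
      push_cast
      omega
    · have hadd := dvd_add hd hsd
      have heq : ((u : ℤ) - (v : ℤ) - e) + ((v : ℤ) - (y : ℤ) - s)
          = (u : ℤ) - (y : ℤ) - (e + s) := by ring
      rwa [heq] at hadd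

lemma circ_reach {n : ℕ} (hn : 10 ≤ n) : ∀ (m : ℕ) (hm : m < n),
    (circulant n {1, 3, n - 3, n - 1}).Reachable ⟨m, hm⟩ ⟨0, by omega⟩ := by
  intro m
  induction m with
  | zero => intro hm; exact SimpleGraph.Reachable.refl _
  | succ m ih =>
    intro hm
    have hadj : (circulant n {1, 3, n - 3, n - 1}).Adj ⟨m + 1, hm⟩ ⟨m, by omega⟩ := by
      refine ⟨by simp [Fin.ext_iff], ?_⟩
      have h1 : (((⟨m + 1, hm⟩ : Fin n) : ℤ) - ((⟨m, by omega⟩ : Fin n) : ℤ)).natAbs = 1 := by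
        simp
      rw [h1]
      exact Finset.mem_insert_self 1 _
    exact hadj.reachable.trans (ih (by omega))

theorem lambda321_circulant_1_3_ten_or_fourteen_k (k n : ℕ) (hk : 0 < k)
    (hn : n = 10 * k ∨ n = 14 * k) :
    lambda321 (circulant n {1, 3, n - 3, n - 1}) ≤ 13 := by
  obtain ⟨p, hp, hpn⟩ : ∃ p, (p = 10 ∨ p = 14) ∧ p ∣ n := by
    rcases hn with h | h
    · exact ⟨10, Or.inl rfl, ⟨k, h⟩⟩
    · exact ⟨14, Or.inr rfl, ⟨k, h⟩⟩
  have hn10 : 10 ≤ n := by rcases hn with h | h <;> omega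
  have hp0 : 0 < p := by omega
  set G := circulant n {1, 3, n - 3, n - 1} with hG
  set f : Fin n → ℕ := fun i => 3 * ((i : ℕ) % p) % 14 with hfdef
  have hf13 : ∀ i, f i ≤ 13 := by
    intro i
    have : 3 * ((i : ℕ) % p) % 14 < 14 := Nat.mod_lt _ (by norm_num)
    simpa [hfdef] using by omega
  have hcheck : patCheck p := by
    rcases hp with h | h <;> subst h
    · exact patCheck10
    · exact patCheck14
  have hlab : IsL321Labeling G f := by
    intro x y hxy
    rcases Nat.lt_or_ge (G.dist x y) 4 with h4 | h4
    swap
    · -- distance at least 4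
      have h1 : (3 : ℤ) - (G.dist x y : ℤ) < 0 := by
        have : (4 : ℤ) ≤ (G.dist x y : ℤ) := by exact_mod_cast h4
        linarith
      exact lt_of_lt_of_le h1 (abs_nonneg _)
    · -- distance at most 3
      have hreach : G.Reachable x y := by
        have hrx := circ_reach hn10 x.val x.isLt
        have hry := circ_reach hn10 y.val y.isLt
        have hx : (⟨x.val, x.isLt⟩ : Fin n) = x := rfl
        have hy : (⟨y.val, y.isLt⟩ : Fin n) = y := rfl
        rw [hx] at hrx; rw [hy] at hry
        exact hrx.trans hry.symm
      have hdpos : 0 < G.dist x y := hreach.pos_dist_of_ne hxy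
      obtain ⟨w, hw⟩ := hreach.exists_walk_length_eq_dist
      obtain ⟨s, hs1, hs2, hsd⟩ := circ_walk_sum hn10 w
      rw [hw] at hs1 hs2
      -- s ≠ 0
      have hxn : (x : ℤ) < n ∧ 0 ≤ (x : ℤ) := by
        constructor
        · exact_mod_cast x.isLt
        · positivity
      have hyn : (y : ℤ) < n ∧ 0 ≤ (y : ℤ) := by
        constructor
        · exact_mod_cast y.isLt
        · positivity
      have hs0 : s ≠ 0 := by
        rintro rfl
        have hdvd : (n : ℤ) ∣ ((x : ℤ) - (y : ℤ)) := by simpa using hsd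
        have h0 : (x : ℤ) - (y : ℤ) = 0 :=
          Int.eq_zero_of_abs_lt_dvd hdvd (by rw [abs_lt]; omega)
        apply hxy
        have : (x : ℤ) = (y : ℤ) := by omega
        have hv : (x : ℕ) = (y : ℕ) := by exact_mod_cast this
        exact Fin.ext hv
      -- pass to residues mod p
      set a : ℕ := (x : ℕ) % p with ha'
      set b : ℕ := (y : ℕ) % p with hb'
      have ha : a < p := Nat.mod_lt _ hp0
      have hb : b < p := Nat.mod_lt _ hp0
      have hpd : (p : ℤ) ∣ ((a : ℤ) - (b : ℤ) - s) := by
        have h1n : p ∣ (x : ℕ) - a := ha' ▸ Nat.dvd_sub_mod _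
        have h2n : p ∣ (y : ℕ) - b := hb' ▸ Nat.dvd_sub_mod _
        have h1 : (p : ℤ) ∣ ((x : ℤ) - (a : ℤ)) := by
          have := Int.natCast_dvd_natCast.mpr h1n
          rwa [Nat.cast_sub (ha' ▸ Nat.mod_le _ _)] at this
        have h2 : (p : ℤ) ∣ ((y : ℤ) - (b : ℤ)) := by
          have := Int.natCast_dvd_natCast.mpr h2n
          rwa [Nat.cast_sub (hb' ▸ Nat.mod_le _ _)] at this
        have h3 : (p : ℤ) ∣ ((x : ℤ) - (y : ℤ) - s) :=
          dvd_trans (by exact_mod_cast Int.natCast_dvd_natCast.mpr hpn) hsd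
        have heq : (a : ℤ) - (b : ℤ) - s
            = ((x : ℤ) - (y : ℤ) - s) - ((x : ℤ) - (a : ℤ)) + ((y : ℤ) - (b : ℤ)) := by ring
        rw [heq]
        exact dvd_add (dvd_sub h3 h1) h2
      have hsabs : s.natAbs ≤ 9 := by omega
      have hfx : f x = 3 * a % 14 := rfl
      have hfy : f y = 3 * b % 14 := rfl
      -- apply the finite check, splitting on the sign of s
      have hmain : ((s.natAbs = 1 ∨ s.natAbs = 3) →
            3 ≤ |((f x : ℤ)) - (f y : ℤ)|) ∧
          ((s.natAbs = 2 ∨ s.natAbs = 4 ∨ s.natAbs = 6) →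
            2 ≤ |((f x : ℤ)) - (f y : ℤ)|) ∧
          (s.natAbs % 2 = 1 → 1 ≤ |((f x : ℤ)) - (f y : ℤ)|) := by
        rcases le_or_gt 0 s with hsgn | hsgn
        · have hcast : ((s.natAbs : ℤ)) = s := Int.natAbs_of_nonneg hsgn
          have := hcheck ⟨a, ha⟩ ⟨b, hb⟩ ⟨s.natAbs, by omega⟩
            (by simp only [Fin.val_mk]; rw [hcast]
                exact Int.emod_eq_zero_of_dvd hpd)
          simpa [hfx, hfy] using this
        · have hcast : ((s.natAbs : ℤ)) = -s := by
            rw [Int.ofNat_natAbs_of_nonpos (le_of_lt hsgn)]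
          have hpd' : ((b : ℤ) - (a : ℤ) - (s.natAbs : ℤ)) % (p : ℤ) = 0 := by
            rw [hcast]
            have : (p : ℤ) ∣ ((b : ℤ) - (a : ℤ) - -s) := by
              have heq : (b : ℤ) - (a : ℤ) - -s = -(((a : ℤ) - (b : ℤ) - s)) := by ring
              rw [heq]; exact Dvd.dvd.neg_right hpd
            exact Int.emod_eq_zero_of_dvd this
          have := hcheck ⟨b, hb⟩ ⟨a, ha⟩ ⟨s.natAbs, by omega⟩
            (by simpa using hpd')
          have habs : |((f x : ℤ)) - (f y : ℤ)| = |((f y : ℤ)) - (f x : ℤ)| :=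
            abs_sub_comm _ _
          rw [habs]
          simpa [hfx, hfy] using this
      have hd123 : G.dist x y = 1 ∨ G.dist x y = 2 ∨ G.dist x y = 3 := by omega
      rcases hd123 with hd | hd | hd <;> rw [hd] at hs1 hs2 ⊢
      · have hodd : s % 2 = 1 ∨ s % 2 = -1 := by omega
        have h13 : s.natAbs = 1 ∨ s.natAbs = 3 := by omega
        have := hmain.1 h13
        push_cast
        linarith
      · have h246 : s.natAbs = 2 ∨ s.natAbs = 4 ∨ s.natAbs = 6 := by omega
        have := hmain.2.1 h246
        push_cast
        linarith
      · have hodd : s.natAbs % 2 = 1 := by omega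
        have := hmain.2.2 hodd
        push_cast
        linarith
  -- conclude
  have hmem : labelingSpan f ∈ {s : ℕ | ∃ g : Fin n → ℕ, IsL321Labeling G g ∧ s = labelingSpan g} :=
    ⟨f, hlab, rfl⟩
  calc lambda321 G ≤ labelingSpan f := Nat.sInf_le hmem
    _ ≤ Finset.univ.sup f := Nat.sub_le _ _
    _ ≤ 13 := Finset.sup_le fun i _ => hf13 i
end

section
/- Let n be an even natural number with n ≥ 142, and let G be the circulant graph C_n({1, 3, n−3, n−1}). Then λ_{(3,2,1)}(G) ≤ 12. -/
def patA : List ℕ := [2,7,0,5,10,3,8,1,6,11,4,9]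
def patC : ℕ → List ℕ
| 2 => [2, 7, 12, 5, 0, 3, 8, 11, 6, 1, 4, 9, 12, 7, 2, 5, 0, 11, 8, 3, 6, 1, 12, 9, 4, 7, 2, 11, 0, 5, 8, 3, 12, 1, 6, 9, 4, 11]
| 4 => [0, 7, 12, 5, 10, 1, 8, 3, 6, 11, 0, 9, 4, 7, 12, 1, 10, 5, 8, 3, 0, 11, 6, 9, 4, 1, 12, 7, 10, 5, 0, 3, 8, 11, 6, 1, 4, 9, 12, 7, 2, 5, 0, 11, 8, 3, 6, 1, 12, 9, 4, 7, 2, 11, 0, 5, 8, 3, 12, 1, 6, 9, 4, 11]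
| 6 => [0, 7, 12, 5, 10, 1, 8, 3, 6, 11, 0, 9, 4, 7, 12, 1, 10, 5, 8, 3, 0, 11, 6, 9, 4, 1, 12, 7, 10, 5, 0, 3, 8, 11, 6, 1, 4, 9, 12, 7, 0, 5, 10, 3, 8, 1, 6, 11, 4, 9, 0, 7, 12, 5, 10, 1, 8, 3, 6, 11, 0, 9, 4, 7, 12, 1, 10, 5, 8, 3, 0, 11, 6, 9, 4, 1, 12, 7, 10, 5, 0, 3, 8, 11, 6, 1, 4, 9, 12, 7, 2, 5, 0, 11, 8, 3, 6, 1, 12, 9, 4, 7, 2, 11, 0, 5, 8, 3, 12, 1, 6, 9, 4, 11]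
| 8 => [0, 7, 12, 5, 10, 1, 8, 3, 6, 11, 0, 9, 4, 7, 12, 1, 10, 5, 8, 3, 0, 11, 6, 9, 4, 1, 12, 7, 10, 5, 0, 3, 8, 11, 6, 1, 4, 9, 12, 7, 2, 5, 0, 11, 8, 3, 6, 1, 12, 9, 4, 7, 2, 11, 0, 5, 8, 3, 12, 1, 6, 9, 4, 11, 2, 7, 0, 5, 10, 3, 8, 1, 6, 11, 4, 9, 0, 7, 12, 5, 10, 1, 8, 3, 6, 11, 0, 9, 4, 7, 12, 1, 10, 5, 8, 3, 0, 11, 6, 9, 4, 1, 12, 7, 10, 5, 0, 3, 8, 11, 6, 1, 4, 9, 12, 7, 2, 5, 0, 11, 8, 3, 6, 1, 12, 9, 4, 7, 2, 11, 0, 5, 8, 3, 12, 1, 6, 9, 4, 11]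
| 10 => [2, 7, 12, 5, 10, 3, 8, 0, 6, 11, 4, 9, 1, 7, 12, 5, 10, 2, 8, 0, 6, 11, 3, 9, 1, 7, 12, 4, 10, 2, 8, 0, 5, 11, 3, 9, 1, 6, 12, 4, 10, 2, 7, 0, 5, 11, 3, 8, 1, 6, 12, 4, 9, 2, 7, 0, 5, 10, 3, 8, 1, 6, 11, 4, 9, 2, 7, 12, 5, 10, 3, 8, 0, 6, 11, 4, 9, 1, 7, 12, 5, 10, 2, 8, 0, 6, 11, 3, 9, 1, 7, 12, 4, 10, 2, 8, 0, 5, 11, 3, 9, 1, 6, 12, 4, 10, 2, 7, 0, 5, 11, 3, 8, 1, 6, 12, 4, 9]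
| _ => []

set_option maxRecDepth 100000

def gapf (m : ℕ) : ℕ :=
  if m = 1 ∨ m = 3 then 3
  else if m = 2 ∨ m = 4 ∨ m = 6 then 2
  else if m = 5 ∨ m = 7 ∨ m = 9 then 1
  else 0

def dd (a b : ℕ) : ℕ := max a b - min a b

def flab' (r i : ℕ) : ℕ :=
  if i < (patC r).length then (patC r).getD i 0
  else patA.getD ((i - (patC r).length) % 12) 0

def flab (n i : ℕ) : ℕ := flab' (n % 12) i

lemma chkAA : ∀ a < 12, ∀ m < 10, 1 ≤ m →
    gapf m ≤ dd (patA.getD a 0) (patA.getD ((a+m)%12) 0) := by decide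

lemma chkCA : ∀ r < 12, ∀ t < 10, ∀ m < 10, (1 ≤ t ∧ t ≤ m ∧ t ≤ (patC r).length) →
    gapf m ≤ dd ((patC r).getD ((patC r).length - t) 0) (patA.getD (m - t) 0) := by decide

lemma chkWrap : ∀ r < 12, ∀ t < 10, ∀ m < 10, 1 ≤ t → t ≤ m →
    gapf m ≤ dd (patA.getD (12 - t) 0) (flab' r (m - t)) := by decide

lemma lenC : ∀ r < 12, r % 2 = 0 → (patC r).length % 12 = r := by decide
lemma lenC' : ∀ r < 12, (patC r).length ≤ 140 := by decide

lemma chkCC : ∀ r < 12, ∀ i < 140, ∀ m < 10, (1 ≤ m ∧ i + m < (patC r).length) →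
    gapf m ≤ dd ((patC r).getD i 0) ((patC r).getD (i+m) 0) := by decide

lemma bndA : ∀ x ∈ patA, x ≤ 12 := by decide
lemma bndC : ∀ r < 12, ∀ x ∈ patC r, x ≤ 12 := by decide

lemma getD_le {l : List ℕ} (h : ∀ x ∈ l, x ≤ 12) (i : ℕ) : l.getD i 0 ≤ 12 := by
  rcases lt_or_ge i l.length with h' | h'
  · rw [List.getD_eq_getElem l 0 h']
    exact h _ (List.getElem_mem h')
  · rw [List.getD_eq_default l 0 h']
    exact Nat.zero_le _

lemma flab_le (n i : ℕ) : flab n i ≤ 12 := by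
  rw [flab, flab']
  split
  · exact getD_le (bndC (n % 12) (Nat.mod_lt _ (by norm_num))) i
  · exact getD_le bndA _

lemma dd_comm (a b : ℕ) : dd a b = dd b a := by
  unfold dd
  omega

lemma dd_abs (a b : ℕ) : (dd a b : ℤ) ≤ |(a : ℤ) - (b : ℤ)| := by
  have hdd : dd a b = max a b - min a b := rfl
  rcases le_total a b with h | h
  · rw [abs_sub_comm, abs_of_nonneg (by exact_mod_cast sub_nonneg.2 (Int.ofNat_le.2 h))]
    omega
  · rw [abs_of_nonneg (by exact_mod_cast sub_nonneg.2 (Int.ofNat_le.2 h))]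
    omega

lemma core (n i m : ℕ) (hn : 142 ≤ n) (hne : n % 2 = 0) (hi : i < n)
    (h1 : 1 ≤ m) (h9 : m ≤ 9) :
    gapf m ≤ dd (flab n i) (flab n ((i + m) % n)) := by
  have hr12 : n % 12 < 12 := Nat.mod_lt _ (by omega)
  have hre : n % 12 % 2 = 0 := by omega
  have hq12 : (patC (n % 12)).length % 12 = n % 12 := lenC _ hr12 hre
  have hq140 : (patC (n % 12)).length ≤ 140 := lenC' _ hr12
  set r := n % 12 with hr
  set q := (patC r).length with hq
  have hqn : q + 12 ≤ n := by omega
  by_cases hw : i + m < n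
  · rw [Nat.mod_eq_of_lt hw]
    by_cases h2 : i + m < q
    · have hi' : i < q := by omega
      rw [flab, flab, flab', flab', ← hr, ← hq, if_pos hi', if_pos h2]
      exact chkCC r hr12 i (by omega) m (by omega) ⟨h1, h2⟩
    · by_cases h3 : i < q
      · rw [flab, flab, flab', flab', ← hr, ← hq, if_pos h3, if_neg h2]
        have ht : i = q - (q - i) := by omega
        have hidx : (i + m - q) % 12 = m - (q - i) := by omega
        rw [hidx]
        nth_rewrite 1 [ht]
        exact chkCA r hr12 (q - i) (by omega) m (by omega) ⟨by omega, by omega, by omega⟩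
      · rw [flab, flab, flab', flab', ← hr, ← hq, if_neg h3, if_neg h2]
        have ha : (i - q) % 12 < 12 := Nat.mod_lt _ (by norm_num)
        have hidx : (i + m - q) % 12 = ((i - q) % 12 + m) % 12 := by omega
        rw [hidx]
        exact chkAA _ ha m (by omega) h1
  · have hmod : (i + m) % n = i + m - n := by
      rw [Nat.mod_eq_sub_mod (by omega), Nat.mod_eq_of_lt (by omega)]
    rw [hmod]
    have hiA : ¬ i < q := by omega
    rw [flab, flab, flab', ← hr, ← hq, if_neg hiA]
    have hidx : (i - q) % 12 = 12 - (n - i) := by omega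
    have hj : i + m - n = m - (n - i) := by omega
    rw [hidx, hj]
    exact chkWrap r hr12 (n - i) (by omega) m (by omega) (by omega) (by omega)

lemma sub_emod_self' (N c : ℤ) : (N - c) % N = (-c) % N := by
  rw [show N - c = -c + N * 1 by ring, Int.add_mul_emod_self_left]

lemma edge_bound {n : ℕ} (hn : 142 ≤ n) {a b : Fin n}
    (h : (circulant n {1, 3, n - 3, n - 1}).Adj a b) :
    ∃ t : ℤ, -3 ≤ t ∧ t ≤ 3 ∧ t % 2 = 1 ∧ ((a : ℤ) - (b : ℤ)) % n = t % n := by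
  have h2 := h.2
  simp only [Finset.mem_insert, Finset.mem_singleton] at h2
  have habs := Int.natAbs_eq ((a : ℤ) - (b : ℤ))
  rcases h2 with h2 | h2 | h2 | h2 <;> rw [h2] at habs
  · exact ⟨(a : ℤ) - b, by omega, by omega, by omega, rfl⟩
  · exact ⟨(a : ℤ) - b, by omega, by omega, by omega, rfl⟩
  · have hc : ((n - 3 : ℕ) : ℤ) = (n : ℤ) - 3 := by omega
    rw [hc] at habs
    rcases habs with habs | habs
    · exact ⟨-3, by norm_num, by norm_num, by norm_num, by rw [habs, sub_emod_self']⟩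
    · refine ⟨3, by norm_num, by norm_num, by norm_num, ?_⟩
      rw [habs, show -((n:ℤ) - 3) = 3 + (n:ℤ) * (-1) by ring, Int.add_mul_emod_self_left]
  · have hc : ((n - 1 : ℕ) : ℤ) = (n : ℤ) - 1 := by omega
    rw [hc] at habs
    rcases habs with habs | habs
    · exact ⟨-1, by norm_num, by norm_num, by norm_num, by rw [habs, sub_emod_self']⟩
    · refine ⟨1, by norm_num, by norm_num, by norm_num, ?_⟩
      rw [habs, show -((n:ℤ) - 1) = 1 + (n:ℤ) * (-1) by ring, Int.add_mul_emod_self_left]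

lemma walk_bound {n : ℕ} (hn : 142 ≤ n) {x y : Fin n}
    (w : (circulant n {1, 3, n - 3, n - 1}).Walk x y) :
    ∃ s : ℤ, -(3 * w.length) ≤ s ∧ s ≤ 3 * w.length ∧ s % 2 = (w.length : ℤ) % 2 ∧
      ((x : ℤ) - (y : ℤ)) % n = s % n := by
  induction w with
  | nil => exact ⟨0, by simp, by simp, by simp, by simp⟩
  | @cons u v z h p ih =>
    obtain ⟨s, hs1, hs1', hs2, hs3⟩ := ih
    obtain ⟨t, ht1, ht1', ht2, ht3⟩ := edge_bound hn h
    refine ⟨t + s, ?_, ?_, ?_, ?_⟩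
    · simp only [SimpleGraph.Walk.length_cons]; push_cast; omega
    · simp only [SimpleGraph.Walk.length_cons]; push_cast; omega
    · simp only [SimpleGraph.Walk.length_cons]; push_cast; omega
    · have : (u : ℤ) - z = ((u : ℤ) - v) + ((v : ℤ) - z) := by ring
      rw [this, Int.add_emod, ht3, hs3, ← Int.add_emod]

lemma reach_aux {n : ℕ} (hn : 142 ≤ n) (x y : Fin n) :
    (circulant n {1, 3, n - 3, n - 1}).Reachable x y := by
  have h0 : 0 < n := by omega
  suffices H : ∀ k (hk : k < n), (circulant n {1, 3, n - 3, n - 1}).Reachable ⟨0, h0⟩ ⟨k, hk⟩ by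
    have hx := H x.val x.isLt
    have hy := H y.val y.isLt
    exact hx.symm.trans hy
  intro k
  induction k with
  | zero => intro _; exact SimpleGraph.Reachable.refl _
  | succ j ih =>
    intro hk
    have hj : j < n := by omega
    refine (ih hj).trans ?_
    have hadj : (circulant n {1, 3, n - 3, n - 1}).Adj ⟨j, hj⟩ ⟨j + 1, hk⟩ := by
      refine ⟨fun hcon => by simpa using congrArg Fin.val hcon, ?_⟩
      simp only [Finset.mem_insert, Finset.mem_singleton]
      left
      have hcast : ((⟨j, hj⟩ : Fin n) : ℤ) = (j : ℤ) := rfl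
      have hcast2 : ((⟨j + 1, hk⟩ : Fin n) : ℤ) = (j : ℤ) + 1 := by push_cast; rfl
      rw [hcast, hcast2]
      omega
    exact hadj.reachable

lemma dist_facts {n : ℕ} (hn : 142 ≤ n) (hne : n % 2 = 0) {x y : Fin n} (hxy : x ≠ y) :
    1 ≤ (circulant n {1, 3, n - 3, n - 1}).dist x y ∧
    min ((x : ℤ) - (y : ℤ)).natAbs (n - ((x : ℤ) - (y : ℤ)).natAbs) ≤
      3 * (circulant n {1, 3, n - 3, n - 1}).dist x y ∧
    (circulant n {1, 3, n - 3, n - 1}).dist x y % 2 = ((x : ℤ) - (y : ℤ)).natAbs % 2 := by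
  have hr := reach_aux hn x y
  have hpos := hr.pos_dist_of_ne hxy
  obtain ⟨w, hw⟩ := hr.exists_walk_length_eq_dist
  obtain ⟨s, hs1, hs1', hs2, hs3⟩ := walk_bound hn w
  rw [hw] at hs1 hs1' hs2
  have hdvd : (n : ℤ) ∣ s - ((x : ℤ) - y) := Int.ModEq.dvd hs3
  obtain ⟨k, hk⟩ := hdvd
  have hxn : (x : ℤ) < n := by exact_mod_cast x.isLt
  have hyn : (y : ℤ) < n := by exact_mod_cast y.isLt
  have hx0 : 0 ≤ (x : ℤ) := by positivity
  have hy0 : 0 ≤ (y : ℤ) := by positivity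
  have hne' : (x : ℤ) ≠ y := by
    intro hcon
    exact hxy (Fin.val_injective (by exact_mod_cast hcon))
  obtain ⟨n', hn'⟩ : ∃ n', n = 2 * n' := ⟨n / 2, by omega⟩
  have htri : s - ((x : ℤ) - y) = 0 ∨ (n : ℤ) ≤ s - ((x : ℤ) - y) ∨
      s - ((x : ℤ) - y) ≤ -(n : ℤ) := by
    rcases lt_trichotomy k 0 with hk0 | hk0 | hk0
    · right; right
      have : (n : ℤ) * k ≤ n * (-1) := mul_le_mul_of_nonneg_left (by omega) (by positivity)
      omega
    · left; rw [hk, hk0, mul_zero]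
    · right; left
      have : (n : ℤ) * 1 ≤ n * k := mul_le_mul_of_nonneg_left (by omega) (by positivity)
      omega
  have heven : ∃ w : ℤ, s - ((x : ℤ) - y) = 2 * w := by
    refine ⟨(n' : ℤ) * k, ?_⟩
    rw [hk, hn']; push_cast; ring
  obtain ⟨w, hw2⟩ := heven
  have habs := Int.natAbs_eq ((x : ℤ) - y)
  refine ⟨hpos, ?_, ?_⟩ <;>
  · generalize hg : ((x : ℤ) - (y : ℤ)).natAbs = g at habs ⊢
    rcases htri with h | h | h <;> rcases habs with h' | h' <;> omega

lemma pair_bound {n : ℕ} (hn : 142 ≤ n) (hne : n % 2 = 0) (x y : Fin n)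
    (hlt : x.val < y.val) (hm9 : min (y.val - x.val) (n - (y.val - x.val)) ≤ 9) :
    gapf (min (y.val - x.val) (n - (y.val - x.val))) ≤ dd (flab n x.val) (flab n y.val) := by
  have hyn := y.isLt
  have hxn := x.isLt
  set δ := y.val - x.val with hδ
  by_cases hc : δ ≤ 9
  · have hmin : min δ (n - δ) = δ := by omega
    rw [hmin]
    have h := core n x.val δ hn hne (by omega) (by omega) (by omega)
    rw [Nat.mod_eq_of_lt (show x.val + δ < n by omega),
      show x.val + δ = y.val by omega] at h
    exact h
  · have hmin : min δ (n - δ) = n - δ := by omega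
    rw [hmin]
    have h := core n y.val (n - δ) hn hne (by omega) (by omega) (by omega)
    rw [show y.val + (n - δ) = x.val + n by omega, Nat.add_mod_right,
      Nat.mod_eq_of_lt hxn] at h
    rw [dd_comm]
    exact h


theorem lambda321_circulant_1_3_even_large (n : ℕ) (hne : Even n) (hn : 142 ≤ n) :
    lambda321 (circulant n {1, 3, n - 3, n - 1}) ≤ 12 := by
  have hne2 : n % 2 = 0 := Nat.even_iff.mp hne
  set G := circulant n {1, 3, n - 3, n - 1} with hG
  set f : Fin n → ℕ := fun v => flab n v.val with hf
  have hlab : IsL321Labeling G f := by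
    intro x y hxy
    obtain ⟨hd1, hd2, hd3⟩ := dist_facts hn hne2 hxy
    have hxn := x.isLt
    have hyn := y.isLt
    have hvne : x.val ≠ y.val := fun h => hxy (Fin.val_injective h)
    set d := G.dist x y with hd
    set D := ((x : ℤ) - (y : ℤ)).natAbs with hD
    have hDval : (x.val ≤ y.val ∧ D = y.val - x.val) ∨ (y.val < x.val ∧ D = x.val - y.val) := by
      rcases le_or_gt x.val y.val with h | h
      · left
        refine ⟨h, ?_⟩
        have h0 : (0 : ℤ) ≤ (y : ℤ) - (x : ℤ) := by
          have : (x : ℤ) ≤ (y : ℤ) := by exact_mod_cast h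
          omega
        have := Int.natAbs_of_nonneg h0
        rw [hD, ← Int.natAbs_neg, neg_sub]
        omega
      · right
        refine ⟨h, ?_⟩
        have h0 : (0 : ℤ) ≤ (x : ℤ) - (y : ℤ) := by
          have : (y : ℤ) ≤ (x : ℤ) := by exact_mod_cast h.le
          omega
        have := Int.natAbs_of_nonneg h0
        rw [hD]
        omega
    by_cases hm : min D (n - D) ≤ 9
    · have hgap : gapf (min D (n - D)) ≤ dd (f x) (f y) := by
        rcases hDval with ⟨h, hDv⟩ | ⟨h, hDv⟩
        · have hlt : x.val < y.val := by omega
          have := pair_bound hn hne2 x y hlt (by omega)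
          rw [hDv]
          exact this
        · have := pair_bound hn hne2 y x h (by omega)
          rw [← hDv, dd_comm] at this
          exact this
      have habs : (dd (f x) (f y) : ℤ) ≤ |(f x : ℤ) - (f y : ℤ)| := dd_abs _ _
      have hm1 : 1 ≤ min D (n - D) := by omega
      have hpar : min D (n - D) % 2 = D % 2 := by omega
      have hkey : (3 : ℤ) - d < gapf (min D (n - D)) := by
        set m := min D (n - D) with hmm
        have h3d : m ≤ 3 * d := hd2
        have hpar2 : d % 2 = m % 2 := by omega
        interval_cases m <;> simp only [gapf] <;> norm_num <;> omega
      have : (gapf (min D (n - D)) : ℤ) ≤ |(f x : ℤ) - (f y : ℤ)| := by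
        calc (gapf (min D (n - D)) : ℤ) ≤ (dd (f x) (f y) : ℤ) := by exact_mod_cast hgap
          _ ≤ _ := habs
      omega
    · have h4 : 4 ≤ d := by omega
      have habs : (0 : ℤ) ≤ |(f x : ℤ) - (f y : ℤ)| := abs_nonneg _
      omega
  have hspan : labelingSpan f ≤ 12 := by
    refine le_trans (Nat.sub_le _ _) ?_
    exact Finset.sup_le fun v _ => flab_le n v.val
  calc lambda321 G ≤ labelingSpan f := Nat.sInf_le ⟨f, hlab, rfl⟩
    _ ≤ 12 := hspan
end

section
/- Let G be the circulant graph C_n({1, 3, n−3, n−1}), where n ∈ {51, 53, 55, 57, 59, 67, 69}. Then λ_{(3,2,1)}(G) ≤ 13. -/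
/-- required label gap for circular distance `m` -/
def need (m : ℕ) : ℕ :=
  if m = 1 ∨ m = 3 then 3
  else if m = 2 ∨ m = 4 ∨ m = 6 then 2
  else if m = 5 ∨ m = 7 ∨ m = 9 then 1
  else 0

lemma need_eq_zero {m : ℕ} (h : 10 ≤ m) : need m = 0 := by
  rw [need]; split_ifs <;> omega

lemma adj_iff (n : ℕ) (x y : Fin n) :
    (circulant n {1, 3, n - 3, n - 1}).Adj x y ↔
      x ≠ y ∧ (((x:ℤ) - (y:ℤ)).natAbs = 1 ∨ ((x:ℤ) - (y:ℤ)).natAbs = 3 ∨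
        ((x:ℤ) - (y:ℤ)).natAbs = n - 3 ∨ ((x:ℤ) - (y:ℤ)).natAbs = n - 1) := by
  simp [circulant, SimpleGraph.Adj]

lemma reach_zero (n : ℕ) (hn : 0 < n) : ∀ k (hk : k < n),
    (circulant n {1, 3, n - 3, n - 1}).Reachable ⟨0, hn⟩ ⟨k, hk⟩ := by
  intro k
  induction k with
  | zero => intro hk; exact SimpleGraph.Reachable.refl _
  | succ k ih =>
    intro hk
    have hk' : k < n := by omega
    refine (ih hk').trans (SimpleGraph.Adj.reachable ?_)
    rw [adj_iff]
    refine ⟨?_, ?_⟩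
    · intro h
      have := Fin.mk.injEq k hk' (k+1) hk ▸ h
      omega
    · left
      show ((k : ℤ) - (k+1 : ℕ)).natAbs = 1
      push_cast
      omega

lemma preconn (n : ℕ) (hn : 0 < n) : (circulant n {1, 3, n - 3, n - 1}).Preconnected := by
  intro x y
  obtain ⟨a, ha⟩ := x
  obtain ⟨b, hb⟩ := y
  exact (reach_zero n hn a ha).symm.trans (reach_zero n hn b hb)

lemma step_lemma (n : ℕ) (hn : 19 < n) {x y : Fin n}
    (h : (circulant n {1, 3, n - 3, n - 1}).Adj x y) :
    ∃ z : ℤ, (n:ℤ) ∣ ((x:ℤ) - (y:ℤ) - z) ∧ z.natAbs ≤ 3 ∧ z.natAbs % 2 = 1 := by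
  obtain ⟨-, hd⟩ := (adj_iff n x y).mp h
  rcases hd with hd | hd | hd | hd
  · exact ⟨(x:ℤ) - y, ⟨0, by ring⟩, by omega, by omega⟩
  · exact ⟨(x:ℤ) - y, ⟨0, by ring⟩, by omega, by omega⟩
  · rcases Int.natAbs_eq_iff.mp hd with h' | h'
    · exact ⟨-3, ⟨1, by rw [h']; omega⟩, by norm_num, by norm_num⟩
    · exact ⟨3, ⟨-1, by rw [h']; omega⟩, by norm_num, by norm_num⟩
  · rcases Int.natAbs_eq_iff.mp hd with h' | h'
    · exact ⟨-1, ⟨1, by rw [h']; omega⟩, by norm_num, by norm_num⟩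
    · exact ⟨1, ⟨-1, by rw [h']; omega⟩, by norm_num, by norm_num⟩

lemma walk_sum (n : ℕ) (hn : 19 < n) :
    ∀ {x y : Fin n} (w : (circulant n {1, 3, n - 3, n - 1}).Walk x y),
    ∃ z : ℤ, (n:ℤ) ∣ ((x:ℤ) - (y:ℤ) - z) ∧ z.natAbs ≤ 3 * w.length ∧
      (2:ℤ) ∣ (z - w.length) := by
  intro x y w
  induction w with
  | nil => exact ⟨0, ⟨0, by ring⟩, by simp, by simp⟩
  | @cons a b c h p ih =>
    obtain ⟨z, hz1, hz2, hz3⟩ := ih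
    obtain ⟨z1, h1, h2, h3⟩ := step_lemma n hn h
    refine ⟨z1 + z, ?_, ?_, ?_⟩
    · have he : (a:ℤ) - c - (z1 + z) = ((a:ℤ) - b - z1) + ((b:ℤ) - c - z) := by ring
      rw [he]; exact dvd_add h1 hz1
    · simp only [SimpleGraph.Walk.length_cons]
      have := Int.natAbs_add_le z1 z
      omega
    · simp only [SimpleGraph.Walk.length_cons]
      push_cast
      omega

lemma dist_bound (n : ℕ) (hn : 19 < n) {x y : Fin n}
    (w : (circulant n {1, 3, n - 3, n - 1}).Walk x y) (hw : w.length ≤ 3) :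
    min (((x:ℤ) - (y:ℤ)).natAbs) (n - ((x:ℤ) - (y:ℤ)).natAbs) ≤ 3 * w.length ∧
    min (((x:ℤ) - (y:ℤ)).natAbs) (n - ((x:ℤ) - (y:ℤ)).natAbs) % 2 = w.length % 2 := by
  obtain ⟨z, hz1, hz2, hz3⟩ := walk_sum n hn w
  obtain ⟨k, hk⟩ := hz1
  have hx : (x : ℕ) < n := x.2
  have hy : (y : ℕ) < n := y.2
  have hz9 : z.natAbs ≤ 9 := by omega
  have hzb : -9 ≤ z ∧ z ≤ 9 := by omega
  have hxb : (0:ℤ) ≤ (x:ℤ) ∧ (x:ℤ) < n := ⟨by positivity, by exact_mod_cast hx⟩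
  have hyb : (0:ℤ) ≤ (y:ℤ) ∧ (y:ℤ) < n := ⟨by positivity, by exact_mod_cast hy⟩
  have hnn : (19:ℤ) < n := by exact_mod_cast hn
  have hklt : k < 2 := by
    have h1 : (n:ℤ) * k < (n:ℤ) * 2 := by rw [← hk]; linarith
    exact lt_of_mul_lt_mul_left h1 (by linarith)
  have hkgt : -2 < k := by
    have h1 : (n:ℤ) * (-2) < (n:ℤ) * k := by rw [← hk]; linarith
    exact lt_of_mul_lt_mul_left h1 (by linarith)
  have hk3 : k = -1 ∨ k = 0 ∨ k = 1 := by omega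
  rcases hk3 with rfl | rfl | rfl <;> omega

lemma isLab (n : ℕ) (hn : 19 < n) (f : Fin n → ℕ)
    (H : ∀ x y : Fin n, x ≠ y →
      (need (min (((x:ℤ) - (y:ℤ)).natAbs) (n - ((x:ℤ) - (y:ℤ)).natAbs)) : ℤ)
        ≤ |(f x : ℤ) - (f y : ℤ)|) :
    IsL321Labeling (circulant n {1, 3, n - 3, n - 1}) f := by
  intro x y hxy
  have hH := H x y hxy
  have hx : (x : ℕ) < n := x.2
  have hy : (y : ℕ) < n := y.2
  have hvne : (x : ℕ) ≠ (y : ℕ) := fun h => hxy (Fin.val_injective h)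
  show (3 : ℤ) - (circulant n {1, 3, n - 3, n - 1}).dist x y < |(f x : ℤ) - (f y : ℤ)|
  by_cases hadj : (circulant n {1, 3, n - 3, n - 1}).Adj x y
  · have h1 : (circulant n {1, 3, n - 3, n - 1}).dist x y = 1 :=
      SimpleGraph.dist_eq_one_iff_adj.mpr hadj
    obtain ⟨-, hh⟩ := (adj_iff n x y).mp hadj
    have hm13 : min (((x:ℤ) - (y:ℤ)).natAbs) (n - ((x:ℤ) - (y:ℤ)).natAbs) = 1 ∨
        min (((x:ℤ) - (y:ℤ)).natAbs) (n - ((x:ℤ) - (y:ℤ)).natAbs) = 3 := by omega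
    have h3le : (3:ℤ) ≤ |(f x : ℤ) - (f y : ℤ)| := by
      rcases hm13 with h | h <;> rw [h] at hH
      · rwa [show need 1 = 3 from rfl, Nat.cast_ofNat] at hH
      · rwa [show need 3 = 3 from rfl, Nat.cast_ofNat] at hH
    rw [h1]
    push_cast
    linarith
  · have h0 : 0 < (circulant n {1, 3, n - 3, n - 1}).dist x y :=
      SimpleGraph.Reachable.pos_dist_of_ne (preconn n (by omega) x y) hxy
    have h1 : (circulant n {1, 3, n - 3, n - 1}).dist x y ≠ 1 := fun h =>
      hadj (SimpleGraph.dist_eq_one_iff_adj.mp h)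
    have hm13 : min (((x:ℤ) - (y:ℤ)).natAbs) (n - ((x:ℤ) - (y:ℤ)).natAbs) ≠ 1 ∧
        min (((x:ℤ) - (y:ℤ)).natAbs) (n - ((x:ℤ) - (y:ℤ)).natAbs) ≠ 3 := by
      constructor <;> intro hmv <;> exact hadj ((adj_iff n x y).mpr ⟨hxy, by omega⟩)
    by_cases h3 : (circulant n {1, 3, n - 3, n - 1}).dist x y ≤ 3
    · obtain ⟨w, hwl⟩ :=
        SimpleGraph.Reachable.exists_walk_length_eq_dist (preconn n (by omega) x y)
      have hb := dist_bound n hn w (by omega)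
      rw [hwl] at hb
      have hdist : (circulant n {1, 3, n - 3, n - 1}).dist x y = 2 ∨
          (circulant n {1, 3, n - 3, n - 1}).dist x y = 3 := by omega
      rcases hdist with h2 | h2
      · rw [h2] at hb
        have hmv : min (((x:ℤ) - (y:ℤ)).natAbs) (n - ((x:ℤ) - (y:ℤ)).natAbs) = 2 ∨
            min (((x:ℤ) - (y:ℤ)).natAbs) (n - ((x:ℤ) - (y:ℤ)).natAbs) = 4 ∨
            min (((x:ℤ) - (y:ℤ)).natAbs) (n - ((x:ℤ) - (y:ℤ)).natAbs) = 6 := by omega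
        have h2le : (2:ℤ) ≤ |(f x : ℤ) - (f y : ℤ)| := by
          rcases hmv with h | h | h <;> rw [h] at hH
          · rwa [show need 2 = 2 from rfl, Nat.cast_ofNat] at hH
          · rwa [show need 4 = 2 from rfl, Nat.cast_ofNat] at hH
          · rwa [show need 6 = 2 from rfl, Nat.cast_ofNat] at hH
        rw [h2]
        push_cast
        linarith
      · rw [h2] at hb
        have hmv : min (((x:ℤ) - (y:ℤ)).natAbs) (n - ((x:ℤ) - (y:ℤ)).natAbs) = 5 ∨
            min (((x:ℤ) - (y:ℤ)).natAbs) (n - ((x:ℤ) - (y:ℤ)).natAbs) = 7 ∨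
            min (((x:ℤ) - (y:ℤ)).natAbs) (n - ((x:ℤ) - (y:ℤ)).natAbs) = 9 := by omega
        have h1le : (1:ℤ) ≤ |(f x : ℤ) - (f y : ℤ)| := by
          rcases hmv with h | h | h <;> rw [h] at hH
          · rwa [show need 5 = 1 from rfl, Nat.cast_one] at hH
          · rwa [show need 7 = 1 from rfl, Nat.cast_one] at hH
          · rwa [show need 9 = 1 from rfl, Nat.cast_one] at hH
        rw [h2]
        push_cast
        linarith
    · push_neg at h3
      have h4 : (4:ℤ) ≤ (circulant n {1, 3, n - 3, n - 1}).dist x y := by exact_mod_cast h3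
      have := abs_nonneg ((f x : ℤ) - (f y : ℤ))
      linarith

def goodCheck (n : ℕ) (L : List ℕ) : Bool :=
  (List.range n).all fun i =>
    Nat.ble (L.getD i 0) 13 &&
    ((List.range 9).all fun t =>
      let j := if i + t + 1 < n then i + t + 1 else i + t + 1 - n
      Nat.ble (need (t + 1))
        (max (L.getD i 0) (L.getD j 0) - min (L.getD i 0) (L.getD j 0)))

lemma goodCheck_spec (n : ℕ) (L : List ℕ) (h : goodCheck n L = true) (hn : 19 < n) :
    (∀ i, i < n → L.getD i 0 ≤ 13) ∧
    ∀ i j t, i < n → j < n → t < 9 → (j = i + t + 1 ∨ j + n = i + t + 1) →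
      need (t + 1) ≤ max (L.getD i 0) (L.getD j 0) - min (L.getD i 0) (L.getD j 0) := by
  simp only [goodCheck, List.all_eq_true, List.mem_range, Bool.and_eq_true, Nat.ble_eq] at h
  constructor
  · intro i hi
    exact (h i hi).1
  · intro i j t hi hj ht hjd
    have h2 := (h i hi).2 t ht
    have hje : (if i + t + 1 < n then i + t + 1 else i + t + 1 - n) = j := by
      split_ifs <;> omega
    rwa [hje] at h2

lemma key (n : ℕ) (hn : 19 < n) (L : List ℕ) (h : goodCheck n L = true) :
    lambda321 (circulant n {1, 3, n - 3, n - 1}) ≤ 13 := by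
  obtain ⟨h13, hpair⟩ := goodCheck_spec n L h hn
  set f : Fin n → ℕ := fun i => L.getD i 0 with hf
  have hlab : IsL321Labeling (circulant n {1, 3, n - 3, n - 1}) f := by
    apply isLab n hn f
    intro x y hxy
    have hx : (x : ℕ) < n := x.2
    have hy : (y : ℕ) < n := y.2
    have hvne : (x : ℕ) ≠ (y : ℕ) := fun h => hxy (Fin.val_injective h)
    have hfx : f x = L.getD x.1 0 := rfl
    have hfy : f y = L.getD y.1 0 := rfl
    set M := min (((x:ℤ) - (y:ℤ)).natAbs) (n - ((x:ℤ) - (y:ℤ)).natAbs) with hM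
    have hgap : need M ≤ max (L.getD x.1 0) (L.getD y.1 0) - min (L.getD x.1 0) (L.getD y.1 0) := by
      by_cases hM9 : M ≤ 9
      · have hM1 : 1 ≤ M := by omega
        have hcase : (y.1 = x.1 + (M - 1) + 1 ∨ y.1 + n = x.1 + (M - 1) + 1) ∨
            (x.1 = y.1 + (M - 1) + 1 ∨ x.1 + n = y.1 + (M - 1) + 1) := by omega
        have hMe : M - 1 + 1 = M := by omega
        rcases hcase with hc | hc
        · have := hpair x.1 y.1 (M - 1) hx hy (by omega) hc
          rwa [hMe] at this
        · have := hpair y.1 x.1 (M - 1) hy hx (by omega) hc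
          rw [hMe] at this
          omega
      · rw [need_eq_zero (by omega)]
        omega
    rw [hfx, hfy, Int.abs_eq_natAbs]
    omega
  calc lambda321 (circulant n {1, 3, n - 3, n - 1})
      ≤ labelingSpan f := Nat.sInf_le ⟨f, hlab, rfl⟩
    _ ≤ Finset.univ.sup f := Nat.sub_le _ _
    _ ≤ 13 := Finset.sup_le fun i _ => h13 i.1 i.2

theorem lambda321_circulant_1_3_odd_special (n : ℕ)
    (hn : n ∈ ({51, 53, 55, 57, 59, 67, 69} : Set ℕ)) :
    lambda321 (circulant n {1, 3, n - 3, n - 1}) ≤ 13 := by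
  simp only [Set.mem_insert_iff, Set.mem_singleton_iff] at hn
  rcases hn with rfl | rfl | rfl | rfl | rfl | rfl | rfl
  · exact key 51 (by norm_num) [0, 3, 8, 11, 6, 1, 4, 9, 12, 7, 0, 3, 10, 13, 6, 1, 4, 9, 12, 7, 2, 5, 10, 13, 8, 0, 6, 11, 3, 9, 1, 7, 12, 4, 10, 2, 8, 0, 5, 13, 3, 9, 1, 6, 12, 4, 10, 2, 7, 13, 5] (by decide)
  · exact key 53 (by norm_num) [0, 3, 8, 11, 6, 1, 4, 9, 12, 7, 2, 5, 10, 13, 8, 0, 6, 11, 3, 9, 1, 7, 12, 4, 10, 2, 8, 0, 5, 11, 3, 13, 1, 6, 9, 4, 12, 2, 7, 0, 5, 10, 3, 8, 1, 6, 11, 4, 9, 2, 7, 13, 5] (by decide)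
  · exact key 55 (by norm_num) [0, 3, 8, 5, 10, 1, 12, 7, 4, 9, 0, 11, 6, 13, 8, 3, 10, 5, 0, 7, 2, 12, 4, 9, 6, 1, 13, 3, 11, 5, 0, 8, 2, 10, 4, 12, 7, 1, 9, 3, 11, 6, 13, 8, 0, 10, 5, 12, 7, 2, 9, 4, 11, 6, 13] (by decide)
  · exact key 57 (by norm_num) [0, 3, 8, 5, 10, 1, 12, 7, 4, 9, 0, 11, 6, 13, 8, 2, 10, 5, 12, 7, 1, 9, 3, 11, 6, 0, 8, 2, 10, 4, 13, 7, 1, 9, 3, 12, 5, 0, 8, 2, 11, 4, 13, 6, 1, 10, 3, 12, 5, 0, 7, 2, 11, 4, 9, 6, 13] (by decide)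
  · exact key 59 (by norm_num) [5, 10, 1, 8, 13, 6, 11, 0, 9, 2, 7, 4, 13, 10, 1, 8, 5, 12, 3, 0, 9, 6, 13, 4, 11, 2, 7, 0, 5, 12, 3, 9, 1, 6, 13, 4, 10, 2, 8, 0, 5, 11, 3, 9, 1, 7, 12, 4, 10, 2, 8, 13, 6, 11, 3, 9, 0, 7, 12] (by decide)
  · exact key 67 (by norm_num) [0, 3, 6, 9, 12, 1, 4, 7, 10, 13, 0, 5, 8, 3, 12, 1, 6, 9, 4, 13, 2, 7, 0, 5, 10, 3, 8, 13, 6, 11, 1, 9, 4, 7, 12, 0, 10, 2, 8, 13, 5, 11, 3, 9, 1, 6, 12, 4, 10, 2, 7, 13, 5, 0, 3, 8, 11, 6, 1, 4, 9, 12, 7, 2, 5, 10, 13] (by decide)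
  · exact key 69 (by norm_num) [0, 3, 6, 9, 12, 1, 4, 7, 10, 13, 2, 5, 0, 9, 12, 3, 6, 1, 8, 11, 4, 13, 2, 7, 0, 5, 10, 3, 8, 13, 6, 11, 1, 9, 4, 7, 12, 0, 10, 2, 8, 13, 5, 11, 3, 9, 1, 6, 12, 4, 10, 2, 7, 13, 5, 0, 3, 8, 11, 6, 1, 4, 9, 12, 7, 2, 5, 10, 13] (by decide)
end

section
/- Let G be the circulant graph C_n({1, 4, n−4, n−1}), where n ∈ {60, 69, 70, 71}. Then λ_{(3,2,1)}(G) ≤ 16. -/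
/-- The combinatorial condition on a pair of labels `u, v` at positions `i, j`. -/
def GoodPair (n u v i j : ℕ) : Prop :=
  ((min (max i j - min i j) (n - (max i j - min i j)) = 1 ∨
    min (max i j - min i j) (n - (max i j - min i j)) = 4) →
      3 ≤ max u v - min u v) ∧
  ((min (max i j - min i j) (n - (max i j - min i j)) = 2 ∨
    min (max i j - min i j) (n - (max i j - min i j)) = 3 ∨
    min (max i j - min i j) (n - (max i j - min i j)) = 5 ∨
    min (max i j - min i j) (n - (max i j - min i j)) = 8) →
      2 ≤ max u v - min u v) ∧
  ((min (max i j - min i j) (n - (max i j - min i j)) = 6 ∨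
    min (max i j - min i j) (n - (max i j - min i j)) = 7 ∨
    min (max i j - min i j) (n - (max i j - min i j)) = 9 ∨
    min (max i j - min i j) (n - (max i j - min i j)) = 12) →
      1 ≤ max u v - min u v)

instance (n u v i j : ℕ) : Decidable (GoodPair n u v i j) := by
  unfold GoodPair; infer_instance

section Master

variable {n : ℕ}

lemma circulant_adj_step (hn : 26 ≤ n) {x y : Fin n}
    (h : (circulant n {1, 4, n - 4, n - 1}).Adj x y) :
    ∃ e : ℤ, (e = 1 ∨ e = -1 ∨ e = 4 ∨ e = -4) ∧ (n : ℤ) ∣ ((x : ℤ) - (y : ℤ) - e) := by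
  obtain ⟨hne, hmem⟩ := h
  simp only [Finset.mem_insert, Finset.mem_singleton] at hmem
  have hx : (x : ℤ) < n := by exact_mod_cast x.isLt
  have hy : (y : ℤ) < n := by exact_mod_cast y.isLt
  have hx0 : (0 : ℤ) ≤ x := by positivity
  have hy0 : (0 : ℤ) ≤ y := by positivity
  have hcases : (x : ℤ) - y = 1 ∨ (x : ℤ) - y = -1 ∨ (x : ℤ) - y = 4 ∨ (x : ℤ) - y = -4 ∨
      (x : ℤ) - y = (n : ℤ) - 4 ∨ (x : ℤ) - y = -((n : ℤ) - 4) ∨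
      (x : ℤ) - y = (n : ℤ) - 1 ∨ (x : ℤ) - y = -((n : ℤ) - 1) := by
    omega
  rcases hcases with h | h | h | h | h | h | h | h
  · exact ⟨1, by tauto, ⟨0, by omega⟩⟩
  · exact ⟨-1, by tauto, ⟨0, by omega⟩⟩
  · exact ⟨4, by tauto, ⟨0, by omega⟩⟩
  · exact ⟨-4, by tauto, ⟨0, by omega⟩⟩
  · exact ⟨-4, by tauto, ⟨1, by omega⟩⟩
  · exact ⟨4, by tauto, ⟨-1, by omega⟩⟩
  · exact ⟨-1, by tauto, ⟨1, by omega⟩⟩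
  · exact ⟨1, by tauto, ⟨-1, by omega⟩⟩

lemma circulant_walk_sum (hn : 26 ≤ n) {x y : Fin n}
    (p : (circulant n {1, 4, n - 4, n - 1}).Walk x y) :
    ∃ a b : ℤ, a.natAbs + b.natAbs ≤ p.length ∧
      (n : ℤ) ∣ ((x : ℤ) - (y : ℤ) - (a + 4 * b)) := by
  induction p with
  | nil => exact ⟨0, 0, by simp, by simp⟩
  | @cons u v w h q ih =>
    obtain ⟨a, b, hab, hdvd⟩ := ih
    obtain ⟨e, he, hedvd⟩ := circulant_adj_step hn h
    rcases he with he | he | he | he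
    · refine ⟨a + 1, b, by simp [SimpleGraph.Walk.length_cons]; omega, ?_⟩
      have heq : (u : ℤ) - w - ((a + 1) + 4 * b) =
          ((u : ℤ) - v - e) + ((v : ℤ) - w - (a + 4 * b)) := by rw [he]; ring
      rw [heq]; exact dvd_add hedvd hdvd
    · refine ⟨a - 1, b, by simp [SimpleGraph.Walk.length_cons]; omega, ?_⟩
      have heq : (u : ℤ) - w - ((a - 1) + 4 * b) =
          ((u : ℤ) - v - e) + ((v : ℤ) - w - (a + 4 * b)) := by rw [he]; ring
      rw [heq]; exact dvd_add hedvd hdvd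
    · refine ⟨a, b + 1, by simp [SimpleGraph.Walk.length_cons]; omega, ?_⟩
      have heq : (u : ℤ) - w - (a + 4 * (b + 1)) =
          ((u : ℤ) - v - e) + ((v : ℤ) - w - (a + 4 * b)) := by rw [he]; ring
      rw [heq]; exact dvd_add hedvd hdvd
    · refine ⟨a, b - 1, by simp [SimpleGraph.Walk.length_cons]; omega, ?_⟩
      have heq : (u : ℤ) - w - (a + 4 * (b - 1)) =
          ((u : ℤ) - v - e) + ((v : ℤ) - w - (a + 4 * b)) := by rw [he]; ring
      rw [heq]; exact dvd_add hedvd hdvd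

lemma circulant_adj_succ (hn : 26 ≤ n) (k : ℕ) (hk : k + 1 < n) :
    (circulant n {1, 4, n - 4, n - 1}).Adj ⟨k, by omega⟩ ⟨k + 1, hk⟩ := by
  constructor
  · intro hcontra
    have := congrArg Fin.val hcontra
    simp at this
  · have : (((⟨k, by omega⟩ : Fin n) : ℤ) - ((⟨k + 1, hk⟩ : Fin n) : ℤ)).natAbs = 1 := by
      simp
    rw [this]
    simp

lemma circulant_reachable_zero (hn : 26 ≤ n) (k : ℕ) (hk : k < n) :
    (circulant n {1, 4, n - 4, n - 1}).Reachable ⟨0, by omega⟩ ⟨k, hk⟩ := by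
  induction k with
  | zero => exact SimpleGraph.Reachable.refl _
  | succ m ih =>
    exact (ih (by omega)).trans (circulant_adj_succ hn m hk).reachable

lemma circulant_reachable (hn : 26 ≤ n) (x y : Fin n) :
    (circulant n {1, 4, n - 4, n - 1}).Reachable x y := by
  have hx := circulant_reachable_zero hn x.val x.isLt
  have hy := circulant_reachable_zero hn y.val y.isLt
  have ex : (⟨x.val, x.isLt⟩ : Fin n) = x := rfl
  have ey : (⟨y.val, y.isLt⟩ : Fin n) = y := rfl
  rw [ex] at hx; rw [ey] at hy
  exact hx.symm.trans hy


lemma key_arith (n xv yv t u v : ℕ) (a b m : ℤ)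
    (hn : 26 ≤ n) (hx : xv < n) (hy : yv < n) (hne : xv ≠ yv)
    (hab : a.natAbs + b.natAbs ≤ t) (ht : t ≤ 3) (ht1 : 1 ≤ t)
    (hm1 : -2 < m) (hm2 : m < 2)
    (hm : (xv : ℤ) - yv - (a + 4 * b) = n * m)
    (h1 : (min (max xv yv - min xv yv) (n - (max xv yv - min xv yv)) = 1 ∨
           min (max xv yv - min xv yv) (n - (max xv yv - min xv yv)) = 4) →
             3 ≤ max u v - min u v)
    (h2 : (min (max xv yv - min xv yv) (n - (max xv yv - min xv yv)) = 2 ∨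
           min (max xv yv - min xv yv) (n - (max xv yv - min xv yv)) = 3 ∨
           min (max xv yv - min xv yv) (n - (max xv yv - min xv yv)) = 5 ∨
           min (max xv yv - min xv yv) (n - (max xv yv - min xv yv)) = 8) →
             2 ≤ max u v - min u v)
    (h3 : (min (max xv yv - min xv yv) (n - (max xv yv - min xv yv)) = 6 ∨
           min (max xv yv - min xv yv) (n - (max xv yv - min xv yv)) = 7 ∨
           min (max xv yv - min xv yv) (n - (max xv yv - min xv yv)) = 9 ∨
           min (max xv yv - min xv yv) (n - (max xv yv - min xv yv)) = 12) →
             1 ≤ max u v - min u v) :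
    (3 : ℤ) - t < |(u : ℤ) - v| := by
  have hc : min (max xv yv - min xv yv) (n - (max xv yv - min xv yv)) =
      (a + 4 * b).natAbs ∧ (a + 4 * b).natAbs ≠ 0 := by
    clear h1 h2 h3
    have h0 : min (max xv yv - min xv yv) (n - (max xv yv - min xv yv)) ≠ 0 := by omega
    have hcc : min (max xv yv - min xv yv) (n - (max xv yv - min xv yv)) =
        (a + 4 * b).natAbs := by
      interval_cases m <;> omega
    exact ⟨hcc, hcc ▸ h0⟩
  obtain ⟨hc, hcne⟩ := hc
  rw [hc] at h1 h2 h3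
  clear hc hm hm1 hm2 hx hy hne hn
  rcases le_total u v with hle | hle
  · rw [abs_sub_comm, abs_of_nonneg (by
      have : (u : ℤ) ≤ (v : ℤ) := by exact_mod_cast hle
      linarith)]
    omega
  · rw [abs_of_nonneg (by
      have : (v : ℤ) ≤ (u : ℤ) := by exact_mod_cast hle
      linarith)]
    omega

set_option maxHeartbeats 400000 in
lemma master (hn : 26 ≤ n) (f : Fin n → ℕ)
    (h : ∀ x y : Fin n, x ≠ y → GoodPair n (f x) (f y) x.val y.val) :
    IsL321Labeling (circulant n {1, 4, n - 4, n - 1}) f := by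
  intro x y hxy
  set G := circulant n {1, 4, n - 4, n - 1} with hG
  have hreach : G.Reachable x y := circulant_reachable hn x y
  have hpos : 0 < G.dist x y := hreach.pos_dist_of_ne hxy
  by_cases hbig : 4 ≤ G.dist x y
  · have h4 : (4 : ℤ) ≤ (G.dist x y : ℤ) := by exact_mod_cast hbig
    have h0 : (0 : ℤ) ≤ |(f x : ℤ) - (f y : ℤ)| := abs_nonneg _
    linarith
  · -- dist ≤ 3
    push_neg at hbig
    obtain ⟨p, hp⟩ := hreach.exists_walk_length_eq_dist
    obtain ⟨a, b, hab, hdvd⟩ := circulant_walk_sum hn p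
    rw [hp] at hab
    obtain ⟨m, hm⟩ := hdvd
    -- bound m
    have hx : (x : ℤ) < n := by exact_mod_cast x.isLt
    have hy : (y : ℤ) < n := by exact_mod_cast y.isLt
    have hx0 : (0 : ℤ) ≤ x := by positivity
    have hy0 : (0 : ℤ) ≤ y := by positivity
    have habs4 : a + 4 * b ≤ 12 ∧ -12 ≤ a + 4 * b := by
      constructor <;> omega
    have hn' : (26 : ℤ) ≤ n := by exact_mod_cast hn
    have hub : (n : ℤ) * m < (n : ℤ) * 2 := by nlinarith [hm, habs4.1, habs4.2]
    have hlb : (n : ℤ) * (-2) < (n : ℤ) * m := by nlinarith [hm, habs4.1, habs4.2]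
    have hm2 : m < 2 := lt_of_mul_lt_mul_left hub (by linarith)
    have hm1 : -2 < m := lt_of_mul_lt_mul_left hlb (by linarith)
    obtain ⟨h1, h2, h3⟩ := h x y hxy
    have hxyval : x.val ≠ y.val := fun hc => hxy (Fin.ext hc)
    exact key_arith n x.val y.val (G.dist x y) (f x) (f y) a b m hn x.isLt y.isLt hxyval
      hab (by omega) hpos hm1 hm2 hm h1 h2 h3

end Master

lemma lambda_le (n : ℕ) (hn : 26 ≤ n) (f : Fin n → ℕ)
    (h : ∀ x y : Fin n, x ≠ y → GoodPair n (f x) (f y) x.val y.val)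
    (hb : ∀ x : Fin n, f x ≤ 16) :
    lambda321 (circulant n {1, 4, n - 4, n - 1}) ≤ 16 := by
  have hlab := master hn f h
  have hmem : labelingSpan f ∈
      {s : ℕ | ∃ g : Fin n → ℕ, IsL321Labeling (circulant n {1, 4, n - 4, n - 1}) g ∧
        s = labelingSpan g} := ⟨f, hlab, rfl⟩
  refine le_trans (Nat.sInf_le hmem) ?_
  unfold labelingSpan
  have hsup : Finset.univ.sup f ≤ 16 := Finset.sup_le fun i _ => hb i
  omega

def L60 : List ℕ := [4,13,6,2,16,8,0,14,10,3,12,7,1,15,9,4,13,6,2,16,8,0,14,10,3,12,7,1,15,9,4,13,6,2,16,8,0,14,10,3,12,7,1,15,9,4,13,6,2,16,8,0,14,10,3,12,7,1,15,9]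
def L69 : List ℕ := [0,13,8,2,15,10,4,12,7,1,16,9,3,14,6,0,11,8,2,13,5,16,10,7,1,12,4,15,9,6,0,11,3,14,8,5,16,10,2,13,7,0,15,9,4,12,6,1,14,8,3,16,11,5,0,13,2,15,10,4,8,12,6,1,14,3,16,11,5]
def L70 : List ℕ := [0,13,8,2,15,10,4,12,7,1,16,9,3,14,6,0,11,8,2,13,5,16,10,7,1,12,4,15,9,6,0,11,3,14,8,5,16,10,2,13,7,0,15,9,4,12,6,1,14,8,3,16,11,5,0,13,7,2,15,10,4,12,6,1,14,9,3,16,11,5]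
def L71 : List ℕ := [0,13,8,2,15,10,4,12,7,1,16,9,3,14,6,0,11,8,2,13,16,4,10,7,1,12,15,3,9,6,0,11,14,2,8,16,4,10,13,6,1,15,3,9,12,5,0,14,7,2,10,4,16,13,6,1,11,8,3,15,5,0,12,7,2,14,9,4,16,11,6]

set_option maxHeartbeats 4000000 in
theorem lambda321_circulant_1_4_exceptional (n : ℕ)
    (hn : n ∈ ({60, 69, 70, 71} : Set ℕ)) :
    lambda321 (circulant n {1, 4, n - 4, n - 1}) ≤ 16 := by
  simp only [Set.mem_insert_iff, Set.mem_singleton_iff] at hn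
  rcases hn with rfl | rfl | rfl | rfl
  · exact lambda_le 60 (by norm_num) (fun i => L60.getD i.val 0) (by decide) (by decide)
  · exact lambda_le 69 (by norm_num) (fun i => L69.getD i.val 0) (by decide) (by decide)
  · exact lambda_le 70 (by norm_num) (fun i => L70.getD i.val 0) (by decide) (by decide)
  · exact lambda_le 71 (by norm_num) (fun i => L71.getD i.val 0) (by decide) (by decide)
end

section
/- Let n be an odd natural number with n ≥ 105, and let G be the circulant graph C_n({1, 5, n−5, n−1}). Then λ_{(3,2,1)}(G) ≤ 14. -/
set_option maxRecDepth 100000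

namespace L321Aux

def req : ℕ → ℕ := fun t => [0,3,2,1,2,3,2,1,0,1,2,1,0,0,0,1].getD t 0

/-- natural-number absolute difference -/
def dd (a b : ℕ) : ℕ := (a - b) + (b - a)

lemma dd_comm (a b : ℕ) : dd a b = dd b a := by unfold dd; omega

lemma dd_cast (a b : ℕ) : (dd a b : ℤ) = |(a : ℤ) - (b : ℤ)| := by
  rcases le_total a b with h | h
  · rw [abs_of_nonpos (by omega)]; unfold dd; omega
  · rw [abs_of_nonneg (by omega)]; unfold dd; omega

/-- the label table lookup: block `B` of length `L.length`, followed by the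
period-12 repetition of the first 12 entries of `L`. -/
def Ftab (L : List ℕ) (m : ℕ) : ℕ :=
  if m < L.length then L.getD m 0 else L.getD ((m - L.length) % 12) 0

def chkMain (L : List ℕ) : Prop :=
  ∀ t ∈ Finset.Icc 1 15,
    (∀ v ∈ Finset.range L.length, v + t < L.length →
        req t ≤ dd (L.getD (v + t) 0) (L.getD v 0)) ∧
    (∀ u ∈ Finset.range t, req t ≤ dd (L.getD u 0) (L.getD (u + L.length - t) 0)) ∧
    (∀ u ∈ Finset.range t, u + 12 < t →
        req t ≤ dd (L.getD u 0) (L.getD (u + L.length + 12 - t) 0))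

def chkP (L : List ℕ) : Prop :=
  ∀ t ∈ Finset.Icc 1 15,
    (∀ j ∈ Finset.range t, req t ≤ dd (L.getD (j % 12) 0) (L.getD (L.length - t + j) 0)) ∧
    (∀ x ∈ Finset.range 12, req t ≤ dd (L.getD ((x + t) % 12) 0) (L.getD x 0)) ∧
    (∀ u ∈ Finset.range t, req t ≤ dd (L.getD u 0) (L.getD ((u + 24 - t) % 12) 0))

instance (L : List ℕ) : Decidable (chkMain L) := by unfold chkMain; infer_instance
instance (L : List ℕ) : Decidable (chkP L) := by unfold chkP; infer_instance

/-- possible sums of `k` elementary steps `±1, ±5`. -/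
def SL : ℕ → List ℤ
  | 0 => [0]
  | (k+1) => (SL k).flatMap (fun s => [s+1, s-1, s+5, s-5])

lemma mem_SL_succ {k : ℕ} {s t : ℤ} (hs : s ∈ ([1,-1,5,-5] : List ℤ))
    (ht : t ∈ SL k) : t + s ∈ SL (k+1) := by
  simp only [SL, List.mem_flatMap]
  refine ⟨t, ht, ?_⟩
  simp only [List.mem_cons, List.mem_singleton, List.not_mem_nil, or_false] at hs
  rcases hs with rfl | rfl | rfl | rfl <;> simp [sub_eq_add_neg]

lemma int_cases (n : ℕ) (hn : 105 ≤ n) (u v : ℕ) (hu : u < n) (hv : v < n) (t : ℤ)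
    (ht : t.natAbs ≤ 15) (hdvd : (n : ℤ) ∣ ((u : ℤ) - v - t)) :
    ((u : ℤ) - v = t) ∨ ((u : ℤ) + n - v = t) ∨ ((u : ℤ) - n - v = t) := by
  obtain ⟨k, hk⟩ := hdvd
  have hu' : (u : ℤ) < n := by exact_mod_cast hu
  have hv' : (v : ℤ) < n := by exact_mod_cast hv
  have hu0 : (0 : ℤ) ≤ u := by positivity
  have hv0 : (0 : ℤ) ≤ v := by positivity
  have hn' : (105 : ℤ) ≤ n := by exact_mod_cast hn
  have ht' : -15 ≤ t ∧ t ≤ 15 := by omega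
  have hk3 : k = 0 ∨ k = 1 ∨ k = -1 := by
    by_contra hcon
    push_neg at hcon
    have h2 : 2 ≤ k ∨ k ≤ -2 := by omega
    rcases h2 with h2 | h2
    · have hmul : (n : ℤ) * 2 ≤ (n : ℤ) * k :=
        mul_le_mul_of_nonneg_left h2 (by linarith)
      linarith
    · have hmul : (n : ℤ) * k ≤ (n : ℤ) * (-2) :=
        mul_le_mul_of_nonneg_left h2 (by linarith)
      linarith
  rcases hk3 with rfl | rfl | rfl
  · left; omega
  · right; right; omega
  · right; left; omega

end L321Aux

open L321Aux in
theorem L321Aux.master (n : ℕ) (hn : 105 ≤ n) (L : List ℕ)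
    (h16 : 16 ≤ L.length) (h117 : L.length ≤ 117)
    (hqn : L.length ≤ n) (hmod : (n - L.length) % 12 = 0)
    (h14 : ∀ k ∈ Finset.range 120, L.getD k 0 ≤ 14)
    (hmain : chkMain L) (hP : n = L.length ∨ chkP L) :
    lambda321 (circulant n {1, 5, n - 5, n - 1}) ≤ 14 := by
  have hn0 : 0 < n := by omega
  set G := circulant n {1, 5, n - 5, n - 1} with hG
  -- the labeling
  set f : Fin n → ℕ := fun i => Ftab L i.val with hf
  -- coercion fact
  have hcoe : ∀ (x : Fin n), (x : ℤ) = (x.val : ℤ) := fun x => rfl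
  -- adjacency step lemma
  have adj_step : ∀ {x y : Fin n}, G.Adj x y →
      ∃ s ∈ ([1,-1,5,-5] : List ℤ), (n : ℤ) ∣ ((x.val : ℤ) - y.val - s) := by
    intro x y h
    obtain ⟨hne, hmem⟩ := h
    simp only [Finset.mem_insert, Finset.mem_singleton] at hmem
    have hx' : x.val < n := x.isLt
    have hy' : y.val < n := y.isLt
    rcases hmem with h1 | h5 | hn5 | hn1
    · rcases Int.natAbs_eq_iff.mp h1 with hd | hd
      · exact ⟨1, by simp, ⟨0, by push_cast at hd ⊢; omega⟩⟩
      · exact ⟨-1, by simp, ⟨0, by push_cast at hd ⊢; omega⟩⟩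
    · rcases Int.natAbs_eq_iff.mp h5 with hd | hd
      · exact ⟨5, by simp, ⟨0, by push_cast at hd ⊢; omega⟩⟩
      · exact ⟨-5, by simp, ⟨0, by push_cast at hd ⊢; omega⟩⟩
    · rcases Int.natAbs_eq_iff.mp hn5 with hd | hd
      · exact ⟨-5, by simp, ⟨1, by push_cast at hd ⊢; omega⟩⟩
      · exact ⟨5, by simp, ⟨-1, by push_cast at hd ⊢; omega⟩⟩
    · rcases Int.natAbs_eq_iff.mp hn1 with hd | hd
      · exact ⟨-1, by simp, ⟨1, by push_cast at hd ⊢; omega⟩⟩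
      · exact ⟨1, by simp, ⟨-1, by push_cast at hd ⊢; omega⟩⟩
  -- walk sum lemma
  have walk_sum : ∀ {x y : Fin n} (w : G.Walk x y),
      ∃ t ∈ SL w.length, (n : ℤ) ∣ ((x.val : ℤ) - y.val - t) := by
    intro x y w
    induction w with
    | nil => exact ⟨0, by simp [SL], by simp⟩
    | @cons a b c h p ih =>
      obtain ⟨t, ht, hdvd⟩ := ih
      obtain ⟨s, hs, hsdvd⟩ := adj_step h
      refine ⟨t + s, ?_, ?_⟩
      · simpa [SimpleGraph.Walk.length_cons] using mem_SL_succ hs ht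
      · have hsum := dvd_add hsdvd hdvd
        have heq : ((a.val : ℤ) - b.val - s) + ((b.val : ℤ) - c.val - t)
            = (a.val : ℤ) - c.val - (t + s) := by ring
        rwa [heq] at hsum
  -- connectivity
  have hadj1 : ∀ (m : ℕ) (h : m + 1 < n), G.Adj ⟨m, by omega⟩ ⟨m+1, h⟩ := by
    intro m h
    refine ⟨by simp only [ne_eq, Fin.mk.injEq]; omega, ?_⟩
    have h1 : (((⟨m, by omega⟩ : Fin n) : ℤ) - ((⟨m+1, h⟩ : Fin n) : ℤ)).natAbs = 1 := by
      rw [hcoe, hcoe]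
      simp only [Fin.val_mk]
      omega
    rw [h1]
    simp
  have reach0 : ∀ (m : ℕ) (hm : m < n), G.Reachable ⟨0, hn0⟩ ⟨m, hm⟩ := by
    intro m
    induction m with
    | zero => intro hm; exact SimpleGraph.Reachable.refl _
    | succ k ih =>
      intro hm
      exact (ih (by omega)).trans (hadj1 k hm).reachable
  have hreachable : ∀ x y : Fin n, G.Reachable x y := by
    intro x y
    have hx := reach0 x.val x.isLt
    have hy := reach0 y.val y.isLt
    rw [Fin.eta] at hx hy
    exact hx.symm.trans hy
  -- the pattern bound
  have pat : ∀ u v t : ℕ, u < n → v < n → 1 ≤ t → t ≤ 15 →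
      (u = v + t ∨ u + n = v + t) → req t ≤ dd (Ftab L u) (Ftab L v) := by
    intro u v t hu hv ht1 ht15 hcase
    have htmem : t ∈ Finset.Icc 1 15 := by simp; omega
    obtain ⟨hC1, hC50, hC51⟩ := hmain t htmem
    rcases hcase with hEq | hWrap
    · by_cases huq : u < L.length
      · have hvq : v < L.length := by omega
        have hres := hC1 v (by simp only [Finset.mem_range]; omega) (by omega)
        have hFu : Ftab L u = L.getD (v + t) 0 := by
          rw [Ftab, if_pos huq, hEq]
        have hFv : Ftab L v = L.getD v 0 := by rw [Ftab, if_pos hvq]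
        rw [hFu, hFv]; exact hres
      · push_neg at huq
        have hnq : L.length < n := by omega
        obtain ⟨hP2, hP3, hP4⟩ := (hP.resolve_left (by omega)) t htmem
        by_cases hvq : v < L.length
        · have hj : u - L.length < t := by omega
          have hres := hP2 (u - L.length) (by simp only [Finset.mem_range]; omega)
          have hvidx : L.length - t + (u - L.length) = v := by omega
          rw [hvidx] at hres
          have hFu : Ftab L u = L.getD ((u - L.length) % 12) 0 := by
            rw [Ftab, if_neg (by omega)]
          have hFv : Ftab L v = L.getD v 0 := by rw [Ftab, if_pos hvq]
          rw [hFu, hFv]; exact hres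
        · push_neg at hvq
          have hres := hP3 ((v - L.length) % 12)
            (by simp only [Finset.mem_range]; omega)
          have hidx : ((v - L.length) % 12 + t) % 12 = (u - L.length) % 12 := by omega
          rw [hidx] at hres
          have hFu : Ftab L u = L.getD ((u - L.length) % 12) 0 := by
            rw [Ftab, if_neg (by omega)]
          have hFv : Ftab L v = L.getD ((v - L.length) % 12) 0 := by
            rw [Ftab, if_neg (by omega)]
          rw [hFu, hFv]; exact hres
    · -- wrap case : u + n = v + t
      have hut : u < t := by omega
      have huq : u < L.length := by omega
      have hFu : Ftab L u = L.getD u 0 := by rw [Ftab, if_pos huq]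
      by_cases hvq : v < L.length
      · have hnq2 : n - L.length = 0 ∨ n - L.length = 12 := by omega
        rcases hnq2 with h0 | h12
        · have hres := hC50 u (by simp only [Finset.mem_range]; omega)
          have hvidx : u + L.length - t = v := by omega
          rw [hvidx] at hres
          have hFv : Ftab L v = L.getD v 0 := by rw [Ftab, if_pos hvq]
          rw [hFu, hFv]; exact hres
        · have hres := hC51 u (by simp only [Finset.mem_range]; omega) (by omega)
          have hvidx : u + L.length + 12 - t = v := by omega
          rw [hvidx] at hres
          have hFv : Ftab L v = L.getD v 0 := by rw [Ftab, if_pos hvq]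
          rw [hFu, hFv]; exact hres
      · push_neg at hvq
        have hnq : L.length < n := by omega
        obtain ⟨hP2, hP3, hP4⟩ := (hP.resolve_left (by omega)) t htmem
        have hres := hP4 u (by simp only [Finset.mem_range]; omega)
        have hidx : (u + 24 - t) % 12 = (v - L.length) % 12 := by omega
        rw [hidx] at hres
        have hFv : Ftab L v = L.getD ((v - L.length) % 12) 0 := by
          rw [Ftab, if_neg (by omega)]
        rw [hFu, hFv]; exact hres
  -- the labeling property
  have hlab : IsL321Labeling G f := by
    intro x y hxy
    have hreach := hreachable x y
    have hdpos : 0 < G.dist x y := hreach.pos_dist_of_ne hxy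
    have habs0 : (0 : ℤ) ≤ |(f x : ℤ) - (f y : ℤ)| := abs_nonneg _
    by_cases hd4 : 4 ≤ G.dist x y
    · have : (4 : ℤ) ≤ (G.dist x y : ℤ) := by exact_mod_cast hd4
      linarith
    · push_neg at hd4
      obtain ⟨w, hw⟩ := hreach.exists_walk_length_eq_dist
      obtain ⟨t, htSL, hdvd⟩ := walk_sum w
      rw [hw] at htSL
      have hd123 : G.dist x y = 1 ∨ G.dist x y = 2 ∨ G.dist x y = 3 := by omega
      have hSLfact : ∀ d, (d = 1 ∨ d = 2 ∨ d = 3) → ∀ s ∈ SL d, s ≠ 0 →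
          1 ≤ s.natAbs ∧ s.natAbs ≤ 15 ∧ 4 ≤ req s.natAbs + d := by
        rintro d (rfl | rfl | rfl) <;> decide
      have ht0 : t ≠ 0 := by
        rintro rfl
        rcases int_cases n hn x.val y.val x.isLt y.isLt 0 (by omega) hdvd with hc | hc | hc
        · apply hxy
          apply Fin.ext
          omega
        · have hx' : x.val < n := x.isLt
          have hy' : (0:ℤ) ≤ (y.val : ℤ) := by positivity
          omega
        · have hy' : y.val < n := y.isLt
          have hx' : (0:ℤ) ≤ (x.val : ℤ) := by positivity
          omega
      obtain ⟨h1n, h15n, hreqn⟩ := hSLfact (G.dist x y) hd123 t htSL ht0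
      have hddb : req t.natAbs ≤ dd (f x) (f y) := by
        rcases int_cases n hn x.val y.val x.isLt y.isLt t h15n hdvd with hc | hc | hc
        · -- x - y = t
          rcases Int.lt_or_lt_of_ne (by omega : t ≠ 0) with htneg | htpos
          · -- t < 0 : y = x + |t|
            have := pat y.val x.val t.natAbs y.isLt x.isLt (by omega) h15n
              (Or.inl (by omega))
            rw [dd_comm] at this
            exact this
          · exact pat x.val y.val t.natAbs x.isLt y.isLt (by omega) h15n
              (Or.inl (by omega))
        · -- x + n - y = t  (t > 0 here since x < n ≤ y + ... )  wrap : x + n = y + t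
          rcases Int.lt_or_lt_of_ne (by omega : t ≠ 0) with htneg | htpos
          · -- t < 0 impossible : x + n - y > 0
            exfalso
            have hy' : (y.val : ℤ) < n := by exact_mod_cast y.isLt
            have hx0 : (0:ℤ) ≤ (x.val : ℤ) := by positivity
            omega
          · exact pat x.val y.val t.natAbs x.isLt y.isLt (by omega) h15n
              (Or.inr (by omega))
        · -- x - n - y = t : t < 0, wrap with roles swapped : y + n = x + |t|
          rcases Int.lt_or_lt_of_ne (by omega : t ≠ 0) with htneg | htpos
          · have := pat y.val x.val t.natAbs y.isLt x.isLt (by omega) h15n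
              (Or.inr (by omega))
            rw [dd_comm] at this
            exact this
          · exfalso
            have hx' : (x.val : ℤ) < n := by exact_mod_cast x.isLt
            have hy0 : (0:ℤ) ≤ (y.val : ℤ) := by positivity
            omega
      have habs : (req t.natAbs : ℤ) ≤ |(f x : ℤ) - (f y : ℤ)| := by
        rw [← dd_cast]
        exact_mod_cast hddb
      have hc4 : (4 : ℤ) ≤ (req t.natAbs : ℤ) + (G.dist x y : ℤ) := by
        exact_mod_cast hreqn
      linarith
  -- values are at most 14
  have hval : ∀ i : Fin n, f i ≤ 14 := by
    intro i
    show Ftab L i.val ≤ 14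
    rw [Ftab]
    split
    · exact h14 _ (by simp only [Finset.mem_range]; omega)
    · exact h14 _ (by simp only [Finset.mem_range]; omega)
  -- conclude
  have hmem : labelingSpan f ∈ {s : ℕ | ∃ g : Fin n → ℕ,
      IsL321Labeling G g ∧ s = labelingSpan g} := ⟨f, hlab, rfl⟩
  have hle : labelingSpan f ≤ 14 := by
    refine le_trans (Nat.sub_le _ _) ?_
    exact Finset.sup_le fun i _ => hval i
  exact le_trans (Nat.sInf_le hmem) hle

namespace L321Aux

def tab1 : List ℕ := [3, 6, 11, 2, 7, 10, 1, 8, 13, 0, 5, 12, 3, 6, 11, 2, 9, 14, 1, 8, 13, 4, 7, 12, 3, 6, 0, 10, 5, 14, 9, 12, 2, 8, 11, 1, 7, 14, 0, 6, 13, 10, 4, 12, 9, 3, 0, 8, 2, 14, 11, 5, 13, 10, 4, 1, 9, 3, 0, 12, 6, 14, 11, 5, 8, 3, 0, 7, 2, 14, 10, 5, 13, 9, 4, 1, 8, 3, 0, 11, 6, 14, 10, 5, 2, 9, 4, 1, 12, 7, 0, 11, 8, 3, 14, 5, 2, 13, 6, 1, 10, 7, 4, 11, 8, 13, 0, 9,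 14]

def tab3 : List ℕ := [11, 6, 3, 10, 5, 0, 14, 8, 1, 12, 7, 2, 11, 6, 3, 10, 5, 0, 9, 14, 1, 12, 7, 4, 11, 6, 9, 2, 13, 0, 3, 14, 11, 8, 5, 12, 1, 6, 3, 14, 9, 4, 13, 10, 7, 2, 11, 8, 0, 4, 13, 6, 3, 14, 11, 8, 0, 12, 7, 1, 5, 14, 9, 4, 13, 10, 7, 1, 11, 6, 0, 3, 13, 8, 2, 14, 11, 5, 0, 10, 4, 8, 2, 12, 7, 1, 13, 10, 4, 14, 9, 3, 6, 1, 11, 5, 0, 14, 8, 3, 13, 7, 2, 12, 6, 1, 4, 9, 0, 14, 8]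

def tab5 : List ℕ := [14, 2, 8, 11, 3, 9, 12, 0, 5, 13, 1, 7, 14, 2, 8, 11, 4, 9, 12, 0, 6, 13, 1, 7, 10, 3, 8, 11, 14, 5, 12, 0, 6, 9, 2, 7, 10, 13, 4, 11, 14, 3, 8, 1, 6, 9, 12, 5, 10, 13, 2, 7, 0, 3, 8, 5, 10, 14, 6, 11, 0, 3, 8, 1, 4, 9, 13, 5, 10, 14, 2, 7, 0, 3, 8, 5, 11, 14, 6, 12, 0, 3, 8, 1, 4, 10, 13, 5, 11, 14, 2, 7, 0, 3, 9, 12, 4, 10, 13, 1, 6]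

def tab7 : List ℕ := [11, 6, 0, 14, 7, 4, 13, 8, 3, 12, 9, 1, 11, 6, 0, 14, 7, 4, 13, 8, 2, 12, 9, 1, 11, 5, 0, 14, 7, 3, 13, 8, 2, 12, 9, 1, 4, 10, 0, 5, 11, 14, 6, 3, 13, 7, 2, 12, 8, 1, 4, 9, 0, 5, 10, 14, 6, 3, 13, 7, 2, 11, 8, 1, 4, 9, 0, 5, 10, 14, 6, 3, 12, 7, 0, 11, 8, 1, 4, 9, 2, 5, 14, 11, 6, 13, 0, 3, 8, 1, 4, 11, 6, 13, 10, 7, 2, 9, 0, 3, 12, 5, 14, 11, 6, 1, 10, 7, 4, 13, 8, 3, 12, 9, 2]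

def tab9 : List ℕ := [11, 6, 0, 14, 7, 4, 13, 8, 3, 12, 9, 1, 11, 6, 0, 14, 7, 4, 13, 8, 2, 12, 9, 1, 5, 10, 0, 6, 11, 14, 7, 3, 13, 8, 2, 12, 9, 1, 4, 10, 0, 5, 11, 14, 6, 3, 13, 7, 2, 12, 8, 1, 4, 9, 0, 5, 10, 14, 6, 3, 13, 7, 2, 11, 8, 1, 4, 9, 0, 5, 10, 14, 6, 3, 12, 7, 0, 11, 8, 1, 4, 9, 2, 5, 14, 11, 6, 13, 0, 3, 8, 1, 4, 11, 6, 13, 10, 7, 2, 9, 0, 3, 12, 5, 14, 11, 6, 1, 10, 7, 4, 13, 8, 3, 12, 9, 2]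

def tab11 : List ℕ := [7, 12, 1, 8, 14, 2, 5, 10, 3, 6, 11, 0, 7, 12, 1, 8, 13, 2, 5, 10, 3, 6, 11, 14, 7, 12, 1, 4, 9, 2, 5, 10, 13, 6, 11, 14, 3, 8, 0, 4, 9, 12, 5, 10, 13, 6, 0, 14, 7, 1, 11, 8, 3, 12, 9, 4, 13, 6, 0, 14, 7, 1, 11, 8, 2, 12, 9, 14, 4, 10, 0, 5, 2, 12, 6, 3, 13, 7, 0, 14, 11, 1, 4, 10, 2, 5, 8, 14, 6, 12, 0, 3, 11, 1, 4, 7, 13, 5, 8, 14, 2, 9, 0, 3, 6, 11, 4]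

def tab105 : List ℕ := [3, 11, 1, 4, 7, 13, 5, 8, 14, 2, 9, 0, 3, 6, 11, 4, 7, 12, 1, 8, 14, 2, 5, 10, 3, 6, 11, 8, 13, 0, 9, 4, 1, 6, 11, 2, 7, 12, 9, 4, 13, 0, 5, 2, 7, 10, 3, 8, 11, 14, 5, 12, 1, 4, 9, 2, 7, 10, 13, 6, 11, 14, 3, 8, 0, 4, 9, 12, 5, 10, 13, 6, 0, 14, 7, 1, 11, 8, 2, 12, 9, 14, 4, 10, 0, 5, 2, 12, 6, 3, 13, 7, 0, 14, 11, 1, 4, 10, 2, 5, 8, 14, 6, 12, 0]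

end L321Aux

open L321Aux in
theorem lambda321_circulant_1_5_odd_large (n : ℕ) (hno : Odd n) (hn : 105 ≤ n) :
    lambda321 (circulant n {1, 5, n - 5, n - 1}) ≤ 14 := by
  have h2 : n % 2 = 1 := Nat.odd_iff.mp hno
  by_cases h105 : n = 105
  · subst h105
    exact master 105 (by norm_num) tab105 (by decide) (by decide) (by decide)
      (by decide) (by decide) (by decide) (Or.inl (by decide))
  · have hr : n % 12 = 1 ∨ n % 12 = 3 ∨ n % 12 = 5 ∨ n % 12 = 7 ∨
        n % 12 = 9 ∨ n % 12 = 11 := by omega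
    have hl1 : tab1.length = 109 := by decide
    have hl3 : tab3.length = 111 := by decide
    have hl5 : tab5.length = 101 := by decide
    have hl7 : tab7.length = 115 := by decide
    have hl9 : tab9.length = 117 := by decide
    have hl11 : tab11.length = 107 := by decide
    rcases hr with h | h | h | h | h | h
    · exact master n hn tab1 (by omega) (by omega) (by omega) (by omega)
        (by decide) (by decide) (Or.inr (by decide))
    · exact master n hn tab3 (by omega) (by omega) (by omega) (by omega)
        (by decide) (by decide) (Or.inr (by decide))
    · exact master n hn tab5 (by omega) (by omega) (by omega) (by omega)
        (by decide) (by decide) (Or.inr (by decide))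
    · exact master n hn tab7 (by omega) (by omega) (by omega) (by omega)
        (by decide) (by decide) (Or.inr (by decide))
    · exact master n hn tab9 (by omega) (by omega) (by omega) (by omega)
        (by decide) (by decide) (Or.inr (by decide))
    · exact master n hn tab11 (by omega) (by omega) (by omega) (by omega)
        (by decide) (by decide) (Or.inr (by decide))
end

section
/- The circulant graph C_7({1, 3, 4, 6}) satisfies λ_{(3,2,1)}(C_7({1, 3, 4, 6})) = 12. -/
namespace Aux

abbrev G : SimpleGraph (Fin 7) := circulant 7 {1, 3, 4, 6}

lemma adj_iff (x y : Fin 7) :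
    G.Adj x y ↔ x ≠ y ∧ ((x : ℤ) - (y : ℤ)).natAbs ∈ ({1,3,4,6} : Finset ℕ) := Iff.rfl

instance : DecidableRel G.Adj := fun x y =>
  decidable_of_iff _ (adj_iff x y).symm

lemma common_nbr : ∀ x y : Fin 7, x ≠ y → ¬ G.Adj x y →
    ∃ m : Fin 7, G.Adj x m ∧ G.Adj m y := by decide

lemma dist_le_two {x y : Fin 7} (h : x ≠ y) : G.dist x y ≤ 2 := by
  by_cases ha : G.Adj x y
  · have := SimpleGraph.dist_eq_one_iff_adj.mpr ha
    omega
  · obtain ⟨m, h1, h2⟩ := common_nbr x y h ha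
    have := SimpleGraph.dist_le (SimpleGraph.Walk.cons h1 (SimpleGraph.Walk.cons h2 SimpleGraph.Walk.nil))
    simpa using this

lemma dist_eq_two {x y : Fin 7} (h : x ≠ y) (ha : ¬ G.Adj x y) : G.dist x y = 2 := by
  have h2 := dist_le_two h
  have h1 : G.dist x y ≠ 1 := fun hc => ha (SimpleGraph.dist_eq_one_iff_adj.mp hc)
  have h0 : G.dist x y ≠ 0 := by
    rw [SimpleGraph.dist_ne_zero_iff_ne_and_reachable]
    obtain ⟨m, hm1, hm2⟩ := common_nbr x y h ha
    exact ⟨h, ⟨SimpleGraph.Walk.cons hm1 (SimpleGraph.Walk.cons hm2 SimpleGraph.Walk.nil)⟩⟩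
  omega

def f0 : Fin 7 → ℕ := ![0, 8, 2, 10, 4, 12, 6]

lemma f0_adj : ∀ x y : Fin 7, G.Adj x y → 3 ≤ ((f0 x : ℤ) - (f0 y : ℤ)).natAbs := by decide

lemma f0_ne : ∀ x y : Fin 7, x ≠ y → 2 ≤ ((f0 x : ℤ) - (f0 y : ℤ)).natAbs := by decide

lemma f0_labeling : IsL321Labeling G f0 := by
  intro x y hxy
  by_cases ha : G.Adj x y
  · rw [SimpleGraph.dist_eq_one_iff_adj.mpr ha]
    have := f0_adj x y ha
    rw [Int.abs_eq_natAbs]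
    omega
  · rw [dist_eq_two hxy ha]
    have := f0_ne x y hxy
    rw [Int.abs_eq_natAbs]
    omega

lemma f0_span : labelingSpan f0 = 12 := by
  have hsup : Finset.univ.sup f0 = 12 := by decide
  have hinf : sInf (Set.range f0) = 0 :=
    Nat.sInf_eq_zero.mpr (Or.inl ⟨0, rfl⟩)
  rw [labelingSpan, hsup, hinf]

lemma lower {f : Fin 7 → ℕ} (hf : IsL321Labeling G f) : 12 ≤ labelingSpan f := by
  set m := sInf (Set.range f) with hm
  set M := Finset.univ.sup f with hM
  have hmle : ∀ i, m ≤ f i := fun i => Nat.sInf_le ⟨i, rfl⟩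
  have hMle : ∀ i, f i ≤ M := fun i => Finset.le_sup (Finset.mem_univ i)
  have hpair : ∀ x y : Fin 7, x ≠ y → 2 ≤ ((f x : ℤ) - (f y : ℤ)).natAbs := by
    intro x y hxy
    have hd := dist_le_two hxy
    have := hf x y hxy
    rw [Int.abs_eq_natAbs] at this
    have h3 : (3 : ℤ) - G.dist x y ≥ 1 := by
      have : (G.dist x y : ℤ) ≤ 2 := by exact_mod_cast hd
      omega
    omega
  -- g is injective into Fin ((M - m)/2 + 1)
  have hg : Function.Injective (fun i : Fin 7 => (⟨(f i - m) / 2, by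
      have h1 := hmle i; have h2 := hMle i
      have : (f i - m) / 2 ≤ (M - m) / 2 := Nat.div_le_div_right (by omega)
      omega⟩ : Fin ((M - m) / 2 + 1))) := by
    intro x y hxy
    by_contra hne
    have h2 := hpair x y hne
    have hmx := hmle x; have hmy := hmle y
    have : (f x - m) / 2 = (f y - m) / 2 := by
      simpa using congrArg Fin.val hxy
    omega
  have hcard := Fintype.card_le_of_injective _ hg
  simp [Fintype.card_fin] at hcard
  have : 12 ≤ M - m := by omega
  simpa [labelingSpan, ← hm, ← hM] using this

end Aux

theorem lambda321_circulant_7_1_3 :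
    lambda321 (circulant 7 {1, 3, 4, 6}) = 12 := by
  have hmem : 12 ∈ {s : ℕ | ∃ f : Fin 7 → ℕ, IsL321Labeling Aux.G f ∧ s = labelingSpan f} :=
    ⟨Aux.f0, Aux.f0_labeling, Aux.f0_span.symm⟩
  refine le_antisymm (Nat.sInf_le hmem) ?_
  refine le_csInf ⟨12, hmem⟩ ?_
  rintro s ⟨f, hf, rfl⟩
  exact Aux.lower hf
end
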